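/- arXiv:2004.08213 — 2 statements merged into one kernel-verified Lean document; each statement's English description precedes it below -/
import Mathlib

section
/- Corollary of Theorem 1 (soundness of the original net): Let W = (P, T, F, p_i, p_o, ℓ) be a WF-net with labelling ℓ : T → Σ ∪ {τ}, regarded as a PTree-WF-net by viewing each label as a leaf process tree. Suppose a PTree-WF-net W̃ = (P̃, T̃, F̃, p_i, p_o, ℓ̃) is obtained from W by a finite sequence of pattern reductions (each step being a →-, ×-, ∧-, or ↺-reduction applied to a corresponding pattern occurring in the current net), and suppose T̃ = {t} is a single transition with arc set F̃ = {(p_i, t), (t, p_o)}. Then W is sound. -/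
/-- Process trees over an alphabet `A` (with `τ` represented by `tau`):
leaves are activities in `A` or `τ`, the operators `→` (seq), `×` (choice)
and `∧` (par) have `n + 1 ≥ 1` children, and the loop operator `↺` has
exactly two children. -/
inductive PTree (A : Type) : Type
  | tau : PTree A
  | act : A → PTree A
  | seq : (n : ℕ) → (Fin (n + 1) → PTree A) → PTree A
  | choice : (n : ℕ) → (Fin (n + 1) → PTree A) → PTree A
  | par : (n : ℕ) → (Fin (n + 1) → PTree A) → PTree A
  | loop : PTree A → PTree A → PTree A

/-- A process-tree-labelled Petri net: places and transitions are subsets of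
the ambient (disjoint) types `P` and `T`, the flow relation
`F ⊆ (P × T) ∪ (T × P)` is given by the arc sets `pt` and `tp`, and every
transition carries a process tree label. -/
structure LPNet (P T A : Type) where
  places : Set P
  trans : Set T
  pt : Set (P × T)
  tp : Set (T × P)
  label : T → PTree A

variable {P T A : Type}

/-- The pre-set `•t` of a transition. -/
def preT (N : LPNet P T A) (t : T) : Set P := {p | (p, t) ∈ N.pt}

/-- The post-set `t•` of a transition. -/
def postT (N : LPNet P T A) (t : T) : Set P := {p | (t, p) ∈ N.tp}

/-- The pre-set `•p` of a place. -/
def preP (N : LPNet P T A) (p : P) : Set T := {t | (t, p) ∈ N.tp}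

/-- The post-set `p•` of a place. -/
def postP (N : LPNet P T A) (p : P) : Set T := {t | (p, t) ∈ N.pt}

/-- A marking is a multiset over places, i.e., a function `P → ℕ`. A
transition `t` of the net is enabled at `M` iff `M p > 0` for all `p ∈ •t`. -/
def Enabled (N : LPNet P T A) (M : P → ℕ) (t : T) : Prop :=
  t ∈ N.trans ∧ ∀ p ∈ preT N t, 0 < M p

/-- Firing transition `t` transforms `M` into `(M \ •t) ⊎ t•`. -/
noncomputable def fire (N : LPNet P T A) (t : T) (M : P → ℕ) : P → ℕ :=
  fun p => M p - (preT N t).indicator 1 p + (postT N t).indicator 1 p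

/-- `FSeq N M σ M'` : `σ` is a firing sequence of `N` from `M` to `M'`. -/
inductive FSeq (N : LPNet P T A) : (P → ℕ) → List T → (P → ℕ) → Prop
  | nil (M : P → ℕ) : FSeq N M [] M
  | cons (M : P → ℕ) (t : T) (σ : List T) (M' : P → ℕ) :
      Enabled N M t → FSeq N (fire N t M) σ M' → FSeq N M (t :: σ) M'

/-- `M'` is reachable from `M`. -/
def Reach (N : LPNet P T A) (M M' : P → ℕ) : Prop := ∃ σ, FSeq N M σ M'

/-- The marking identifying a set of places with one token on each element;
in particular `mark {p} = [p]`. -/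
noncomputable def mark (S : Set P) : P → ℕ := S.indicator 1

/-- The directed edge relation of the net on nodes `P ⊕ T`. -/
def netEdge (N : LPNet P T A) (x y : P ⊕ T) : Prop :=
  (∃ p t, x = Sum.inl p ∧ y = Sum.inr t ∧ (p, t) ∈ N.pt) ∨
  (∃ t p, x = Sum.inr t ∧ y = Sum.inl p ∧ (t, p) ∈ N.tp)

/-- `N` together with the designated places `p_i ≠ p_o` is a (PTree-)WF-net:
the sets of places and transitions are finite, arcs connect nodes of the net,
`p_i` is the unique place with empty pre-set, `p_o` is the unique place with
empty post-set, and every place and transition lies on a directed path from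
`p_i` to `p_o`. -/
def IsWFNet (N : LPNet P T A) (pi po : P) : Prop :=
  pi ∈ N.places ∧ po ∈ N.places ∧ pi ≠ po ∧
  N.places.Finite ∧ N.trans.Finite ∧
  (∀ a ∈ N.pt, a.1 ∈ N.places ∧ a.2 ∈ N.trans) ∧
  (∀ a ∈ N.tp, a.1 ∈ N.trans ∧ a.2 ∈ N.places) ∧
  (∀ p ∈ N.places, preP N p = ∅ ↔ p = pi) ∧
  (∀ p ∈ N.places, postP N p = ∅ ↔ p = po) ∧
  (∀ p ∈ N.places, Relation.ReflTransGen (netEdge N) (Sum.inl pi) (Sum.inl p) ∧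
      Relation.ReflTransGen (netEdge N) (Sum.inl p) (Sum.inl po)) ∧
  (∀ t ∈ N.trans, Relation.ReflTransGen (netEdge N) (Sum.inl pi) (Sum.inr t) ∧
      Relation.ReflTransGen (netEdge N) (Sum.inr t) (Sum.inl po))

/-- Soundness of a (PTree-)WF-net: (1) safeness, (2) the final marking
`[p_o]` is reachable from every reachable marking, (3) no dead transitions. -/
def Sound (N : LPNet P T A) (pi po : P) : Prop :=
  (∀ M, Reach N (mark {pi}) M → ∀ p, M p ≤ 1) ∧
  (∀ M, Reach N (mark {pi}) M → Reach N M (mark {po})) ∧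
  (∀ t ∈ N.trans, ∃ M, Reach N (mark {pi}) M ∧ Enabled N M t)

open Classical

/-- `t 0, ..., t (n-1)` are pairwise-distinct transitions of `N` forming a
`→`-pattern: each `tᵢ` uniquely enables `t_{i+1}` and no self-loops occur. -/
def SeqPattern (N : LPNet P T A) (n : ℕ) (t : ℕ → T) : Prop :=
  2 ≤ n ∧ (∀ i < n, t i ∈ N.trans) ∧
  (∀ i < n, ∀ j < n, t i = t j → i = j) ∧
  (∀ i, i + 1 < n → (postT N (t i)).Nonempty ∧ postT N (t i) = preT N (t (i + 1))) ∧
  (∀ i, i + 1 < n → ∀ p ∈ postT N (t i),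
    preP N p = {t i} ∧ postP N p = {t (i + 1)}) ∧
  (⋂ i ∈ Finset.range n, postT N (t i)) = ∅

/-- `N'` is the `→`-reduced net of `N`: the interconnecting places
`t₁• ∪ ⋯ ∪ t_{n-1}•` and the transitions `t₁,...,tₙ` are removed and replaced
by a fresh transition `t'` with pre-set `•t₁` and post-set `tₙ•`, labelled
`→(ℓ(t₁),...,ℓ(tₙ))`. -/
def SeqReduced (N N' : LPNet P T A) (n : ℕ) (t : ℕ → T) (t' : T) : Prop :=
  t' ∉ N.trans ∧
  N'.places = N.places \ ⋃ i ∈ Finset.range (n - 1), postT N (t i) ∧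
  N'.trans = (N.trans \ {u | ∃ i < n, u = t i}) ∪ {t'} ∧
  N'.pt = {a ∈ N.pt | ¬ ∃ i < n, a.2 = t i} ∪
    {a : P × T | a.1 ∈ preT N (t 0) ∧ a.2 = t'} ∧
  N'.tp = {a ∈ N.tp | ¬ ∃ i < n, a.1 = t i} ∪
    {a : T × P | a.1 = t' ∧ a.2 ∈ postT N (t (n - 1))} ∧
  N'.label = fun u =>
    if u = t' then PTree.seq (n - 1) (fun i => N.label (t i.val)) else N.label u

/-- `t 0, ..., t (n-1)` are pairwise-distinct transitions of `N` forming a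
`×`-pattern: all pre-sets coincide, all post-sets coincide, no self-loops. -/
def ChoicePattern (N : LPNet P T A) (n : ℕ) (t : ℕ → T) : Prop :=
  2 ≤ n ∧ (∀ i < n, t i ∈ N.trans) ∧
  (∀ i < n, ∀ j < n, t i = t j → i = j) ∧
  (∀ i < n, preT N (t i) = preT N (t 0)) ∧
  (∀ i < n, postT N (t i) = postT N (t 0)) ∧
  preT N (t 0) ≠ postT N (t 0)

/-- `N'` is the `×`-reduced net of `N`: the transitions `t₁,...,tₙ` are
replaced by a fresh transition `t'` with pre-set `•t₁` and post-set `t₁•`,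
labelled `×(ℓ(t₁),...,ℓ(tₙ))`. -/
def ChoiceReduced (N N' : LPNet P T A) (n : ℕ) (t : ℕ → T) (t' : T) : Prop :=
  t' ∉ N.trans ∧
  N'.places = N.places ∧
  N'.trans = (N.trans \ {u | ∃ i < n, u = t i}) ∪ {t'} ∧
  N'.pt = {a ∈ N.pt | ¬ ∃ i < n, a.2 = t i} ∪
    {a : P × T | a.1 ∈ preT N (t 0) ∧ a.2 = t'} ∧
  N'.tp = {a ∈ N.tp | ¬ ∃ i < n, a.1 = t i} ∪
    {a : T × P | a.1 = t' ∧ a.2 ∈ postT N (t 0)} ∧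
  N'.label = fun u =>
    if u = t' then PTree.choice (n - 1) (fun i => N.label (t i.val)) else N.label u

/-- `t 0, ..., t (n-1)` are pairwise-distinct transitions of `N` forming a
`∧`-pattern (writing `•T = •t₁ ∪ ⋯ ∪ •tₙ` and `T• = t₁• ∪ ⋯ ∪ tₙ•`). -/
def ParPattern (N : LPNet P T A) (n : ℕ) (t : ℕ → T) : Prop :=
  2 ≤ n ∧ (∀ i < n, t i ∈ N.trans) ∧
  (∀ i < n, ∀ j < n, t i = t j → i = j) ∧
  -- (1) pre-sets pairwise disjoint
  (∀ i < n, ∀ j < n, i ≠ j → preT N (t i) ∩ preT N (t j) = ∅) ∧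
  -- (2) post-sets pairwise disjoint
  (∀ i < n, ∀ j < n, i ≠ j → postT N (t i) ∩ postT N (t j) = ∅) ∧
  -- (3) every `p ∈ •tᵢ` satisfies `p• = {tᵢ}`
  (∀ i < n, ∀ p ∈ preT N (t i), postP N p = {t i}) ∧
  -- (4) every `p ∈ tᵢ•` satisfies `•p = {tᵢ}`
  (∀ i < n, ∀ p ∈ postT N (t i), preP N p = {t i}) ∧
  -- (5) every `p ∈ •T` satisfies `•p ∩ T = ∅`
  (∀ p ∈ {p | ∃ i < n, p ∈ preT N (t i)},
    preP N p ∩ {u | ∃ i < n, u = t i} = ∅) ∧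
  -- (6) all `p, p' ∈ •T` satisfy `•p = •p'`
  (∀ p ∈ {p | ∃ i < n, p ∈ preT N (t i)},
    ∀ p' ∈ {p | ∃ i < n, p ∈ preT N (t i)}, preP N p = preP N p') ∧
  -- (7) every `p ∈ T•` satisfies `p• ∩ T = ∅`
  (∀ p ∈ {p | ∃ i < n, p ∈ postT N (t i)},
    postP N p ∩ {u | ∃ i < n, u = t i} = ∅) ∧
  -- (8) all `p, p' ∈ T•` satisfy `p• = p'•`
  (∀ p ∈ {p | ∃ i < n, p ∈ postT N (t i)},
    ∀ p' ∈ {p | ∃ i < n, p ∈ postT N (t i)}, postP N p = postP N p') ∧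
  -- (9) all `u, u' ∈ •(•T)` satisfy `•u = •u'`
  (∀ u u' : T, (∃ p ∈ {p | ∃ i < n, p ∈ preT N (t i)}, u ∈ preP N p) →
    (∃ p ∈ {p | ∃ i < n, p ∈ preT N (t i)}, u' ∈ preP N p) →
    preT N u = preT N u') ∧
  -- (10) all `u, u' ∈ (T•)•` satisfy `u• = u'•`
  (∀ u u' : T, (∃ p ∈ {p | ∃ i < n, p ∈ postT N (t i)}, u ∈ postP N p) →
    (∃ p ∈ {p | ∃ i < n, p ∈ postT N (t i)}, u' ∈ postP N p) →
    postT N u = postT N u')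

/-- `N'` is the `∧`-reduced net of `N`: the transitions `t₁,...,tₙ` are
replaced by a fresh transition `t'` with pre-set `•T` and post-set `T•`,
labelled `∧(ℓ(t₁),...,ℓ(tₙ))`. -/
def ParReduced (N N' : LPNet P T A) (n : ℕ) (t : ℕ → T) (t' : T) : Prop :=
  t' ∉ N.trans ∧
  N'.places = N.places ∧
  N'.trans = (N.trans \ {u | ∃ i < n, u = t i}) ∪ {t'} ∧
  N'.pt = {a ∈ N.pt | ¬ ∃ i < n, a.2 = t i} ∪
    {a : P × T | (∃ i < n, a.1 ∈ preT N (t i)) ∧ a.2 = t'} ∧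
  N'.tp = {a ∈ N.tp | ¬ ∃ i < n, a.1 = t i} ∪
    {a : T × P | a.1 = t' ∧ ∃ i < n, a.2 ∈ postT N (t i)} ∧
  N'.label = fun u =>
    if u = t' then PTree.par (n - 1) (fun i => N.label (t i.val)) else N.label u

/-- The distinct transitions `t₁, t₂` of `N` form a `↺`-pattern. -/
def LoopPattern (N : LPNet P T A) (t₁ t₂ : T) : Prop :=
  t₁ ≠ t₂ ∧ t₁ ∈ N.trans ∧ t₂ ∈ N.trans ∧
  preT N t₁ = postT N t₂ ∧ postT N t₁ = preT N t₂ ∧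
  preT N t₁ ∩ preT N t₂ = ∅ ∧ postT N t₁ ∩ postT N t₂ = ∅

/-- `N'` is the `↺`-reduced net of `N`: the transitions `t₁, t₂` are replaced
by a fresh transition `t'` with pre-set `•t₁` and post-set `t₁•`, labelled
`↺(ℓ(t₁), ℓ(t₂))`. -/
def LoopReduced (N N' : LPNet P T A) (t₁ t₂ t' : T) : Prop :=
  t' ∉ N.trans ∧
  N'.places = N.places ∧
  N'.trans = (N.trans \ {t₁, t₂}) ∪ {t'} ∧
  N'.pt = {a ∈ N.pt | a.2 ≠ t₁ ∧ a.2 ≠ t₂} ∪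
    {a : P × T | a.1 ∈ preT N t₁ ∧ a.2 = t'} ∧
  N'.tp = {a ∈ N.tp | a.1 ≠ t₁ ∧ a.1 ≠ t₂} ∪
    {a : T × P | a.1 = t' ∧ a.2 ∈ postT N t₁} ∧
  N'.label = fun u =>
    if u = t' then PTree.loop (N.label t₁) (N.label t₂) else N.label u

/-- One pattern-reduction step: `N'` is obtained from `N` by a `→`-, `×`-,
`∧`-, or `↺`-reduction applied to a corresponding pattern occurring in `N`. -/
def Reduces {P T A : Type} (N N' : LPNet P T A) : Prop :=
  (∃ n t t', SeqPattern N n t ∧ SeqReduced N N' n t t') ∨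
  (∃ n t t', ChoicePattern N n t ∧ ChoiceReduced N N' n t t') ∨
  (∃ n t t', ParPattern N n t ∧ ParReduced N N' n t t') ∨
  (∃ t₁ t₂ t', LoopPattern N t₁ t₂ ∧ LoopReduced N N' t₁ t₂ t')

/-! ### Auxiliary development for the main theorem -/

section Aux

variable {P T A : Type}

lemma indVal (S : Set P) (p : P) : S.indicator (1 : P → ℕ) p = if p ∈ S then 1 else 0 := by
  simp [Set.indicator_apply]

lemma fire_apply (N : LPNet P T A) (u : T) (M : P → ℕ) (p : P) :
    fire N u M p = M p - (if p ∈ preT N u then 1 else 0) +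
      (if p ∈ postT N u then 1 else 0) := by
  simp [fire, indVal]

lemma mark_apply (S : Set P) (p : P) : mark S p = if p ∈ S then 1 else 0 := indVal S p

lemma reach_rfl (N : LPNet P T A) (M : P → ℕ) : Reach N M M := ⟨[], FSeq.nil M⟩

lemma FSeq.append {N : LPNet P T A} {M M' M'' : P → ℕ} {σ σ' : List T}
    (h : FSeq N M σ M') (h' : FSeq N M' σ' M'') : FSeq N M (σ ++ σ') M'' := by
  induction h with
  | nil => exact h'
  | cons M u σ M₂ hen hs ih => exact FSeq.cons _ _ _ _ hen (ih h')

lemma reach_trans {N : LPNet P T A} {M M' M'' : P → ℕ}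
    (h : Reach N M M') (h' : Reach N M' M'') : Reach N M M'' := by
  obtain ⟨σ, h⟩ := h; obtain ⟨σ', h'⟩ := h'
  exact ⟨σ ++ σ', h.append h'⟩

lemma reach_head {N : LPNet P T A} {M M' : P → ℕ} {u : T}
    (hen : Enabled N M u) (h : Reach N (fire N u M) M') : Reach N M M' := by
  obtain ⟨σ, h⟩ := h; exact ⟨u :: σ, FSeq.cons _ _ _ _ hen h⟩

lemma reach_single {N : LPNet P T A} {M : P → ℕ} {u : T}
    (hen : Enabled N M u) : Reach N M (fire N u M) :=
  reach_head hen (reach_rfl _ _)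

lemma reach_congr {N : LPNet P T A} {M M' M'' : P → ℕ}
    (h : Reach N M M') (he : M' = M'') : Reach N M M'' := he ▸ h

/-- The structural invariant we carry along reductions (in place of full
WF-net-ness): arcs touch only transitions of the net, the source has no
incoming arc, the sink has no outgoing arc, and every transition has a
nonempty pre-set and a nonempty post-set. -/
def NInv (N : LPNet P T A) (pi po : P) : Prop :=
  (∀ a ∈ N.pt, a.2 ∈ N.trans) ∧ (∀ a ∈ N.tp, a.1 ∈ N.trans) ∧
  (∀ u : T, (u, pi) ∉ N.tp) ∧ (∀ u : T, (po, u) ∉ N.pt) ∧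
  (∀ u ∈ N.trans, (preT N u).Nonempty ∧ (postT N u).Nonempty)

/-- Abstract form common to all four reductions: the transitions satisfying
`K` are removed and a fresh transition `t'` with pre-set `Pre'` and post-set
`Post'` is added. -/
structure Red (N N' : LPNet P T A) (K : T → Prop) (t' : T) (Pre' Post' : Set P) : Prop where
  fresh : t' ∉ N.trans
  ktrans : ∀ u, K u → u ∈ N.trans
  htrans : N'.trans = (N.trans \ {u | K u}) ∪ {t'}
  hpt : N'.pt = {a | a ∈ N.pt ∧ ¬ K a.2} ∪ {a : P × T | a.1 ∈ Pre' ∧ a.2 = t'}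
  htp : N'.tp = {a | a ∈ N.tp ∧ ¬ K a.1} ∪ {a : T × P | a.1 = t' ∧ a.2 ∈ Post'}

namespace Red

variable {N N' : LPNet P T A} {K : T → Prop} {t' : T} {Pre' Post' : Set P} {pi po : P}

lemma t'nK (hR : Red N N' K t' Pre' Post') : ¬ K t' := fun h => hR.fresh (hR.ktrans _ h)

lemma mem_trans' (hR : Red N N' K t' Pre' Post') (u : T) :
    u ∈ N'.trans ↔ (u ∈ N.trans ∧ ¬ K u) ∨ u = t' := by
  rw [hR.htrans]; simp only [Set.mem_union, Set.mem_diff, Set.mem_setOf_eq,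
    Set.mem_singleton_iff]; try tauto

lemma t'_mem (hR : Red N N' K t' Pre' Post') : t' ∈ N'.trans := by
  rw [hR.mem_trans']; exact Or.inr rfl

lemma old_mem (hR : Red N N' K t' Pre' Post') {u : T} (hu : u ∈ N.trans) (hK : ¬ K u) :
    u ∈ N'.trans := by
  rw [hR.mem_trans']; exact Or.inl ⟨hu, hK⟩

lemma preT_old (hR : Red N N' K t' Pre' Post') {u : T} (hK : ¬ K u) (hne : u ≠ t') :
    preT N' u = preT N u := by
  ext p
  have : ((p, u) ∈ N.pt ∧ ¬ K u) ∨ (p ∈ Pre' ∧ u = t') ↔ (p, u) ∈ N.pt := by tauto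
  simpa only [preT, Set.mem_setOf_eq, hR.hpt, Set.mem_union] using this

lemma postT_old (hR : Red N N' K t' Pre' Post') {u : T} (hK : ¬ K u) (hne : u ≠ t') :
    postT N' u = postT N u := by
  ext p
  have : ((u, p) ∈ N.tp ∧ ¬ K u) ∨ (u = t' ∧ p ∈ Post') ↔ (u, p) ∈ N.tp := by tauto
  simpa only [postT, Set.mem_setOf_eq, hR.htp, Set.mem_union] using this

lemma preT_t' (hR : Red N N' K t' Pre' Post') (hI : NInv N pi po) :
    preT N' t' = Pre' := by
  ext p
  have : ((p, t') ∈ N.pt ∧ ¬ K t') ∨ (p ∈ Pre' ∧ t' = t') ↔ p ∈ Pre' := by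
    have := fun h : (p, t') ∈ N.pt => hR.fresh (hI.1 (p, t') h)
    tauto
  simpa only [preT, Set.mem_setOf_eq, hR.hpt, Set.mem_union] using this

lemma postT_t' (hR : Red N N' K t' Pre' Post') (hI : NInv N pi po) :
    postT N' t' = Post' := by
  ext p
  have : ((t', p) ∈ N.tp ∧ ¬ K t') ∨ (t' = t' ∧ p ∈ Post') ↔ p ∈ Post' := by
    have := fun h : (t', p) ∈ N.tp => hR.fresh (hI.2.1 (t', p) h)
    tauto
  simpa only [postT, Set.mem_setOf_eq, hR.htp, Set.mem_union] using this

lemma fire_old (hR : Red N N' K t' Pre' Post') {u : T} (hK : ¬ K u) (hne : u ≠ t')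
    (M : P → ℕ) : fire N' u M = fire N u M := by
  unfold fire; rw [hR.preT_old hK hne, hR.postT_old hK hne]

lemma old_ne_t' (hR : Red N N' K t' Pre' Post') {u : T} (hu : u ∈ N.trans) : u ≠ t' :=
  fun h => hR.fresh (h ▸ hu)

lemma enabled_old (hR : Red N N' K t' Pre' Post') {u : T} {M : P → ℕ} (hK : ¬ K u)
    (h : Enabled N M u) : Enabled N' M u := by
  refine ⟨hR.old_mem h.1 hK, ?_⟩
  rw [hR.preT_old hK (hR.old_ne_t' h.1)]; exact h.2

lemma enabled_old' (hR : Red N N' K t' Pre' Post') {u : T} {M : P → ℕ} (hK : ¬ K u)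
    (hne : u ≠ t') (hu : u ∈ N'.trans) (h : Enabled N' M u) : Enabled N M u := by
  rcases (hR.mem_trans' u).1 hu with ⟨hu', -⟩ | h'
  · exact ⟨hu', fun p hp => h.2 p (by rw [hR.preT_old hK hne]; exact hp)⟩
  · exact absurd h' hne

/-- Backward simulation: any `N'`-firing-sequence can be replayed in `N`,
provided the effect of `t'` can. -/
lemma bsim (hR : Red N N' K t' Pre' Post')
    (hstep : ∀ M : P → ℕ, Enabled N' M t' → Reach N M (fire N' t' M)) :
    ∀ {M M' : P → ℕ}, Reach N' M M' → Reach N M M' := by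
  have key : ∀ (σ : List T) (M M' : P → ℕ), FSeq N' M σ M' → Reach N M M' := by
    intro σ
    induction σ with
    | nil => intro M M' h; cases h; exact reach_rfl _ _
    | cons u σ ih =>
      intro M M' h
      cases h with
      | cons _ _ _ _ hen hs =>
        by_cases hu : u = t'
        · subst hu
          exact reach_trans (hstep M hen) (ih _ _ hs)
        · rcases (hR.mem_trans' u).1 hen.1 with ⟨hu', hK⟩ | h'
          · have hen' : Enabled N M u :=
              ⟨hu', fun p hp => hen.2 p (by rw [hR.preT_old hK hu]; exact hp)⟩
            have : fire N' u M = fire N u M := hR.fire_old hK hu M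
            exact reach_head hen' (this ▸ ih _ _ hs)
          · exact absurd h' hu
  rintro M M' ⟨σ, h⟩
  exact key σ M M' h

/-- The invariant is preserved (forwards) by a reduction. -/
lemma inv (hR : Red N N' K t' Pre' Post') (hI : NInv N pi po)
    (hPre : ∀ p ∈ Pre', ∃ v, (p, v) ∈ N.pt)
    (hPost : ∀ p ∈ Post', ∃ v, (v, p) ∈ N.tp)
    (hPreNe : Pre'.Nonempty) (hPostNe : Post'.Nonempty) : NInv N' pi po := by
  obtain ⟨h1, h2, h3, h4, h5⟩ := hI
  refine ⟨?_, ?_, ?_, ?_, ?_⟩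
  · intro a ha
    rw [hR.hpt] at ha
    rcases ha with ⟨ha, hK⟩ | ⟨-, ha⟩
    · exact hR.old_mem (h1 _ ha) hK
    · rw [ha]; exact hR.t'_mem
  · intro a ha
    rw [hR.htp] at ha
    rcases ha with ⟨ha, hK⟩ | ⟨ha, -⟩
    · exact hR.old_mem (h2 _ ha) hK
    · rw [ha]; exact hR.t'_mem
  · intro u hu
    rw [hR.htp] at hu
    rcases hu with ⟨hu, -⟩ | ⟨-, hu⟩
    · exact h3 _ hu
    · obtain ⟨v, hv⟩ := hPost _ hu
      exact h3 v hv
  · intro u hu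
    rw [hR.hpt] at hu
    rcases hu with ⟨hu, -⟩ | ⟨hu, -⟩
    · exact h4 _ hu
    · obtain ⟨v, hv⟩ := hPre _ hu
      exact h4 v hv
  · intro u hu
    rcases (hR.mem_trans' u).1 hu with ⟨hu', hK⟩ | h'
    · rw [hR.preT_old hK (hR.old_ne_t' hu'), hR.postT_old hK (hR.old_ne_t' hu')]
      exact h5 u hu'
    · subst h'
      rw [hR.preT_t' ⟨h1, h2, h3, h4, h5⟩, hR.postT_t' ⟨h1, h2, h3, h4, h5⟩]
      exact ⟨hPreNe, hPostNe⟩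

end Red

end Aux
section Aux2

variable {P T A : Type}

/-- The marking obtained from `M` by un-firing `u`. -/
noncomputable def unfire (N : LPNet P T A) (u : T) (M : P → ℕ) : P → ℕ :=
  fun p => M p - (postT N u).indicator 1 p + (preT N u).indicator 1 p

lemma unfire_apply (N : LPNet P T A) (u : T) (M : P → ℕ) (p : P) :
    unfire N u M p = M p - (if p ∈ postT N u then 1 else 0) +
      (if p ∈ preT N u then 1 else 0) := by
  simp [unfire, indVal]

/-- Strong safety: if the whole post-set of a transition of `N` is marked at
a reachable marking, then the pre-set of this transition is unmarked. -/
def SSafe (N : LPNet P T A) (pi : P) : Prop :=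
  ∀ u ∈ N.trans, ∀ M, Reach N (mark {pi}) M → (∀ q ∈ postT N u, 0 < M q) →
    ∀ p ∈ preT N u, M p = 0

/-- Un-fireability: if the whole post-set of a transition is marked at a
reachable marking, then the marking obtained by un-firing it is reachable. -/
def UnF (N : LPNet P T A) (pi : P) : Prop :=
  ∀ u ∈ N.trans, ∀ M, Reach N (mark {pi}) M → (∀ q ∈ postT N u, 0 < M q) →
    Reach N (mark {pi}) (unfire N u M)

def Good (N : LPNet P T A) (pi po : P) : Prop :=
  Sound N pi po ∧ SSafe N pi ∧ UnF N pi

lemma NInv_of_WF {N : LPNet P T A} {pi po : P} (hWF : IsWFNet N pi po) :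
    NInv N pi po := by
  obtain ⟨h1, h2, h3, h4, h5, h6, h7, h8, h9, h10, h11⟩ := hWF
  refine ⟨fun a ha => (h6 a ha).2, fun a ha => (h7 a ha).1, ?_, ?_, ?_⟩
  · intro u hu
    have hm : u ∈ preP N pi := hu
    rw [(h8 pi h1).2 rfl] at hm
    exact hm
  · intro u hu
    have hm : u ∈ postP N po := hu
    rw [(h9 po h2).2 rfl] at hm
    exact hm
  · intro u hu
    constructor
    · rcases (h11 u hu).1.cases_tail with h | ⟨c, -, hc⟩
      · exact absurd h (by simp)
      · rcases hc with ⟨p, v, rfl, hy, hpv⟩ | ⟨v, p, -, hy, -⟩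
        · injection hy with h
          subst h
          exact ⟨p, hpv⟩
        · exact absurd hy (by simp)
    · rcases (h11 u hu).2.cases_head with h | ⟨c, hc, -⟩
      · exact absurd h (by simp)
      · rcases hc with ⟨p, v, hy, -, -⟩ | ⟨v, p, hy, rfl, hvp⟩
        · exact absurd hy (by simp)
        · injection hy with h
          subst h
          exact ⟨p, hvp⟩

/-! ### The trivial net is good -/

lemma trivial_good {N : LPNet P T A} {pi po : P} {t : T} (hne : pi ≠ po)
    (htrans : N.trans = {t}) (hpt : N.pt = {(pi, t)}) (htp : N.tp = {(t, po)}) :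
    Good N pi po := by
  have hpre : preT N t = {pi} := by
    ext p; simp [preT, hpt, Prod.ext_iff]
  have hpost : postT N t = {po} := by
    ext p; simp [postT, htp, Prod.ext_iff]
  have hfire : fire N t (mark {pi}) = mark {po} := by
    funext p
    rw [fire_apply, hpre, hpost, mark_apply, mark_apply]
    simp only [Set.mem_singleton_iff]
    by_cases h1 : p = pi <;> by_cases h2 : p = po <;> simp [h1, h2]
  have key : ∀ (σ : List T) (M M' : P → ℕ), FSeq N M σ M' →
      (M = mark {pi} ∨ M = mark {po}) → (M' = mark {pi} ∨ M' = mark {po}) := by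
    intro σ
    induction σ with
    | nil => intro M M' h hM; cases h; exact hM
    | cons u σ ih =>
      intro M M' h hM
      cases h with
      | cons _ _ _ _ hen hs =>
        have hut : u = t := by
          have hm := hen.1; rw [htrans] at hm; exact hm
        subst hut
        rcases hM with rfl | rfl
        · rw [hfire] at hs
          exact ih _ _ hs (Or.inr rfl)
        · exfalso
          have h0 := hen.2 pi (by rw [hpre]; rfl)
          rw [mark_apply] at h0
          simp [Set.mem_singleton_iff, hne] at h0
  have hchar : ∀ M, Reach N (mark {pi}) M → M = mark {pi} ∨ M = mark {po} := by
    rintro M ⟨σ, h⟩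
    exact key σ _ _ h (Or.inl rfl)
  have henpi : Enabled N (mark {pi}) t := by
    refine ⟨by rw [htrans]; rfl, ?_⟩
    intro p hp
    rw [hpre, Set.mem_singleton_iff] at hp
    subst hp
    rw [mark_apply]
    simp
  have hreachpo : Reach N (mark {pi}) (mark {po}) := hfire ▸ reach_single henpi
  have hMpo : ∀ M, Reach N (mark {pi}) M → (∀ q ∈ postT N t, 0 < M q) →
      M = mark {po} := by
    intro M hM hq
    rcases hchar M hM with rfl | rfl
    · exfalso
      have h0 := hq po (by rw [hpost]; rfl)
      rw [mark_apply] at h0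
      simp [Set.mem_singleton_iff, Ne.symm hne] at h0
    · rfl
  refine ⟨⟨?_, ?_, ?_⟩, ?_, ?_⟩
  · intro M hM p
    rcases hchar M hM with rfl | rfl <;> (rw [mark_apply]; split <;> omega)
  · intro M hM
    rcases hchar M hM with rfl | rfl
    · exact hreachpo
    · exact reach_rfl _ _
  · intro u hu
    rw [htrans, Set.mem_singleton_iff] at hu
    subst hu
    exact ⟨mark {pi}, reach_rfl _ _, henpi⟩
  · intro u hu M hM hq p hp
    rw [htrans, Set.mem_singleton_iff] at hu
    subst hu
    rcases hMpo M hM hq with rfl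
    rw [hpre, Set.mem_singleton_iff] at hp
    subst hp
    rw [mark_apply]
    simp [Set.mem_singleton_iff, hne]
  · intro u hu M hM hq
    rw [htrans, Set.mem_singleton_iff] at hu
    subst hu
    rcases hMpo M hM hq with rfl
    have huf : unfire N u (mark {po}) = mark {pi} := by
      funext p
      rw [unfire_apply, hpre, hpost, mark_apply, mark_apply]
      simp only [Set.mem_singleton_iff]
      by_cases h1 : p = pi <;> by_cases h2 : p = po <;> simp [h1, h2]
    rw [huf]
    exact reach_rfl _ _

/-! ### Red instances for the four reductions -/

lemma red_of_seq {N N' : LPNet P T A} {n : ℕ} {t : ℕ → T} {t' : T}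
    (hP : SeqPattern N n t) (hRd : SeqReduced N N' n t t') :
    Red N N' (fun u => ∃ i < n, u = t i) t' (preT N (t 0)) (postT N (t (n - 1))) := by
  refine ⟨hRd.1, ?_, hRd.2.2.1, hRd.2.2.2.1, hRd.2.2.2.2.1⟩
  rintro u ⟨i, hi, rfl⟩
  exact hP.2.1 i hi

lemma red_of_choice {N N' : LPNet P T A} {n : ℕ} {t : ℕ → T} {t' : T}
    (hP : ChoicePattern N n t) (hRd : ChoiceReduced N N' n t t') :
    Red N N' (fun u => ∃ i < n, u = t i) t' (preT N (t 0)) (postT N (t 0)) := by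
  refine ⟨hRd.1, ?_, hRd.2.2.1, hRd.2.2.2.1, hRd.2.2.2.2.1⟩
  rintro u ⟨i, hi, rfl⟩
  exact hP.2.1 i hi

lemma red_of_par {N N' : LPNet P T A} {n : ℕ} {t : ℕ → T} {t' : T}
    (hP : ParPattern N n t) (hRd : ParReduced N N' n t t') :
    Red N N' (fun u => ∃ i < n, u = t i) t'
      {p | ∃ i < n, p ∈ preT N (t i)} {p | ∃ i < n, p ∈ postT N (t i)} := by
  refine ⟨hRd.1, ?_, hRd.2.2.1, ?_, ?_⟩
  · rintro u ⟨i, hi, rfl⟩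
    exact hP.2.1 i hi
  · rw [hRd.2.2.2.1]; rfl
  · rw [hRd.2.2.2.2.1]; rfl

lemma red_of_loop {N N' : LPNet P T A} {t₁ t₂ t' : T}
    (hP : LoopPattern N t₁ t₂) (hRd : LoopReduced N N' t₁ t₂ t') :
    Red N N' (fun u => u = t₁ ∨ u = t₂) t' (preT N t₁) (postT N t₁) := by
  refine ⟨hRd.1, ?_, ?_, ?_, ?_⟩
  · rintro u (rfl | rfl)
    · exact hP.2.1
    · exact hP.2.2.1
  · rw [hRd.2.2.1]
    ext u
    simp only [Set.mem_union, Set.mem_diff, Set.mem_insert_iff,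
      Set.mem_singleton_iff, Set.mem_setOf_eq, not_or]
    try tauto
  · rw [hRd.2.2.2.1]
    ext a
    simp only [Set.mem_union, Set.mem_setOf_eq, not_or]
    try tauto
  · rw [hRd.2.2.2.2.1]
    ext a
    simp only [Set.mem_union, Set.mem_setOf_eq, not_or]
    try tauto

/-- One reduction step preserves the structural invariant (forwards). -/
lemma reduces_inv {N N' : LPNet P T A} {pi po : P}
    (h : Reduces N N') (hI : NInv N pi po) : NInv N' pi po := by
  rcases h with ⟨n, t, t', hP, hRd⟩ | ⟨n, t, t', hP, hRd⟩ | ⟨n, t, t', hP, hRd⟩ |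
    ⟨t₁, t₂, t', hP, hRd⟩
  · have h0 : (0 : ℕ) < n := by have := hP.1; omega
    have hn1 : n - 1 < n := by have := hP.1; omega
    exact (red_of_seq hP hRd).inv hI (fun p hp => ⟨t 0, hp⟩) (fun p hp => ⟨t (n - 1), hp⟩)
      (hI.2.2.2.2 (t 0) (hP.2.1 0 h0)).1 (hI.2.2.2.2 (t (n - 1)) (hP.2.1 (n - 1) hn1)).2
  · have h0 : (0 : ℕ) < n := by have := hP.1; omega
    exact (red_of_choice hP hRd).inv hI (fun p hp => ⟨t 0, hp⟩) (fun p hp => ⟨t 0, hp⟩)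
      (hI.2.2.2.2 (t 0) (hP.2.1 0 h0)).1 (hI.2.2.2.2 (t 0) (hP.2.1 0 h0)).2
  · have h0 : (0 : ℕ) < n := by have := hP.1; omega
    refine (red_of_par hP hRd).inv hI ?_ ?_ ?_ ?_
    · rintro p ⟨i, hi, hp⟩; exact ⟨t i, hp⟩
    · rintro p ⟨i, hi, hp⟩; exact ⟨t i, hp⟩
    · obtain ⟨p, hp⟩ := (hI.2.2.2.2 (t 0) (hP.2.1 0 h0)).1
      exact ⟨p, 0, h0, hp⟩
    · obtain ⟨p, hp⟩ := (hI.2.2.2.2 (t 0) (hP.2.1 0 h0)).2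
      exact ⟨p, 0, h0, hp⟩
  · exact (red_of_loop hP hRd).inv hI (fun p hp => ⟨t₁, hp⟩) (fun p hp => ⟨t₁, hp⟩)
      (hI.2.2.2.2 t₁ hP.2.1).1 (hI.2.2.2.2 t₁ hP.2.1).2

end Aux2
section CaseChoice

variable {P T A : Type} {N N' : LPNet P T A} {pi po : P} {n : ℕ} {t : ℕ → T} {t' : T}

lemma choice_good (hP : ChoicePattern N n t) (hRd : ChoiceReduced N N' n t t')
    (hI : NInv N pi po) (hG : Good N' pi po) : Good N pi po := by
  obtain ⟨hS', hSS', hUF'⟩ := hG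
  have hR := red_of_choice hP hRd
  have h0n : 0 < n := by have := hP.1; omega
  have hpre' : preT N' t' = preT N (t 0) := hR.preT_t' hI
  have hpost' : postT N' t' = postT N (t 0) := hR.postT_t' hI
  have hfeq : ∀ i < n, ∀ M : P → ℕ, fire N (t i) M = fire N' t' M := by
    intro i hi M
    unfold fire
    rw [hpre', hpost', hP.2.2.2.1 i hi, hP.2.2.2.2.1 i hi]
  have hent' : ∀ i < n, ∀ M : P → ℕ, Enabled N M (t i) → Enabled N' M t' := by
    intro i hi M h
    refine ⟨hR.t'_mem, ?_⟩
    intro p hp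
    rw [hpre', ← hP.2.2.2.1 i hi] at hp
    exact h.2 p hp
  have hent : ∀ i < n, ∀ M : P → ℕ, Enabled N' M t' → Enabled N M (t i) := by
    intro i hi M h
    refine ⟨hP.2.1 i hi, ?_⟩
    intro p hp
    refine h.2 p ?_
    rw [hpre', ← hP.2.2.2.1 i hi]
    exact hp
  have hbs : ∀ {M M'' : P → ℕ}, Reach N' M M'' → Reach N M M'' := by
    refine hR.bsim ?_
    intro M h
    rw [← hfeq 0 h0n M]
    exact reach_single (hent 0 h0n M h)
  have hfs : ∀ {M M'' : P → ℕ}, Reach N M M'' → Reach N' M M'' := by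
    have key : ∀ (σ : List T) (M M'' : P → ℕ), FSeq N M σ M'' → Reach N' M M'' := by
      intro σ
      induction σ with
      | nil => intro M M'' h; cases h; exact reach_rfl _ _
      | cons u σ ih =>
        intro M M'' h
        cases h with
        | cons _ _ _ _ hen hs =>
          by_cases hKu : ∃ i < n, u = t i
          · obtain ⟨i, hi, rfl⟩ := hKu
            refine reach_head (hent' i hi M hen) ?_
            rw [← hfeq i hi M]
            exact ih _ _ hs
          · refine reach_head (hR.enabled_old hKu hen) ?_
            rw [hR.fire_old hKu (hR.old_ne_t' hen.1) M]
            exact ih _ _ hs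
    rintro M M'' ⟨σ, h⟩
    exact key σ _ _ h
  refine ⟨⟨?_, ?_, ?_⟩, ?_, ?_⟩
  · exact fun M hM p => hS'.1 M (hfs hM) p
  · exact fun M hM => hbs (hS'.2.1 M (hfs hM))
  · intro u hu
    by_cases hKu : ∃ i < n, u = t i
    · obtain ⟨i, hi, rfl⟩ := hKu
      obtain ⟨M, hM, hen⟩ := hS'.2.2 t' hR.t'_mem
      exact ⟨M, hbs hM, hent i hi M hen⟩
    · obtain ⟨M, hM, hen⟩ := hS'.2.2 u (hR.old_mem hu hKu)
      refine ⟨M, hbs hM, hu, ?_⟩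
      intro p hp
      exact hen.2 p (by rw [hR.preT_old hKu (hR.old_ne_t' hu)]; exact hp)
  · intro u hu M hM hq p hp
    by_cases hKu : ∃ i < n, u = t i
    · obtain ⟨i, hi, rfl⟩ := hKu
      refine hSS' t' hR.t'_mem M (hfs hM) ?_ p ?_
      · intro q hq'
        rw [hpost', ← hP.2.2.2.2.1 i hi] at hq'
        exact hq q hq'
      · rw [hpre', ← hP.2.2.2.1 i hi]
        exact hp
    · refine hSS' u (hR.old_mem hu hKu) M (hfs hM) ?_ p ?_
      · intro q hq'
        rw [hR.postT_old hKu (hR.old_ne_t' hu)] at hq'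
        exact hq q hq'
      · rw [hR.preT_old hKu (hR.old_ne_t' hu)]
        exact hp
  · intro u hu M hM hq
    by_cases hKu : ∃ i < n, u = t i
    · obtain ⟨i, hi, rfl⟩ := hKu
      have hq' : ∀ q ∈ postT N' t', 0 < M q := by
        intro q hq'
        rw [hpost', ← hP.2.2.2.2.1 i hi] at hq'
        exact hq q hq'
      have hr := hUF' t' hR.t'_mem M (hfs hM) hq'
      have heq : unfire N (t i) M = unfire N' t' M := by
        unfold unfire
        rw [hpre', hpost', hP.2.2.2.1 i hi, hP.2.2.2.2.1 i hi]
      rw [heq]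
      exact hbs hr
    · have hq' : ∀ q ∈ postT N' u, 0 < M q := by
        intro q hq'
        rw [hR.postT_old hKu (hR.old_ne_t' hu)] at hq'
        exact hq q hq'
      have hr := hUF' u (hR.old_mem hu hKu) M (hfs hM) hq'
      have heq : unfire N u M = unfire N' u M := by
        unfold unfire
        rw [hR.preT_old hKu (hR.old_ne_t' hu), hR.postT_old hKu (hR.old_ne_t' hu)]
      rw [heq]
      exact hbs hr

end CaseChoice

section CaseLoop

variable {P T A : Type} {N N' : LPNet P T A} {pi po : P} {t₁ t₂ t' : T}

lemma loop_good (hP : LoopPattern N t₁ t₂) (hRd : LoopReduced N N' t₁ t₂ t')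
    (hI : NInv N pi po) (hG : Good N' pi po) : Good N pi po := by
  obtain ⟨hS', hSS', hUF'⟩ := hG
  have hR := red_of_loop hP hRd
  obtain ⟨hne12, ht1, ht2, hA, hB, hAB, hBA⟩ := hP
  have hpre' : preT N' t' = preT N t₁ := hR.preT_t' hI
  have hpost' : postT N' t' = postT N t₁ := hR.postT_t' hI
  have hfeq1 : ∀ M : P → ℕ, fire N t₁ M = fire N' t' M := by
    intro M; unfold fire; rw [hpre', hpost']
  have hent1' : ∀ M : P → ℕ, Enabled N M t₁ → Enabled N' M t' := by
    intro M h
    refine ⟨hR.t'_mem, ?_⟩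
    intro p hp
    rw [hpre'] at hp
    exact h.2 p hp
  have hent1 : ∀ M : P → ℕ, Enabled N' M t' → Enabled N M t₁ := by
    intro M h
    exact ⟨ht1, fun p hp => h.2 p (by rw [hpre']; exact hp)⟩
  have hufeq : ∀ M : P → ℕ, unfire N' t' M = fire N t₂ M := by
    intro M; unfold unfire fire; rw [hpre', hpost', hB, hA]
  have hbs : ∀ {M M'' : P → ℕ}, Reach N' M M'' → Reach N M M'' := by
    refine hR.bsim ?_
    intro M h
    rw [← hfeq1 M]
    exact reach_single (hent1 M h)
  have hfs0 : ∀ M, Reach N (mark {pi}) M → Reach N' (mark {pi}) M := by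
    have key : ∀ (σ : List T) (M M'' : P → ℕ), FSeq N M σ M'' →
        Reach N' (mark {pi}) M → Reach N' (mark {pi}) M'' := by
      intro σ
      induction σ with
      | nil => intro M M'' h hM; cases h; exact hM
      | cons u σ ih =>
        intro M M'' h hM
        cases h with
        | cons _ _ _ _ hen hs =>
          rcases _root_.em (u = t₁) with rfl | hne1
          · refine ih _ _ hs ?_
            rw [hfeq1 M]
            exact reach_trans hM (reach_single (hent1' M hen))
          rcases _root_.em (u = t₂) with rfl | hne2
          · refine ih _ _ hs ?_
            have hq : ∀ q ∈ postT N' t', 0 < M q := by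
              intro q hq
              rw [hpost', hB] at hq
              exact hen.2 q hq
            have hr := hUF' t' hR.t'_mem M hM hq
            rw [hufeq M] at hr
            exact hr
          · have hKu : ¬ (u = t₁ ∨ u = t₂) := by tauto
            refine ih _ _ hs ?_
            rw [← hR.fire_old hKu (hR.old_ne_t' hen.1) M]
            exact reach_trans hM (reach_single (hR.enabled_old hKu hen))
    rintro M ⟨σ, h⟩
    exact key σ _ _ h (reach_rfl _ _)
  refine ⟨⟨?_, ?_, ?_⟩, ?_, ?_⟩
  · exact fun M hM p => hS'.1 M (hfs0 M hM) p
  · exact fun M hM => hbs (hS'.2.1 M (hfs0 M hM))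
  · intro u hu
    rcases _root_.em (u = t₁) with rfl | hne1
    · obtain ⟨M, hM, hen⟩ := hS'.2.2 t' hR.t'_mem
      exact ⟨M, hbs hM, hent1 M hen⟩
    rcases _root_.em (u = t₂) with rfl | hne2
    · obtain ⟨M, hM, hen⟩ := hS'.2.2 t' hR.t'_mem
      refine ⟨fire N t₁ M, reach_trans (hbs hM) (reach_single (hent1 M hen)), ht2, ?_⟩
      intro q hq
      have hq1 : q ∈ postT N t₁ := by rw [hB]; exact hq
      have hq2 : q ∉ preT N t₁ := by
        intro hmem
        have : q ∈ preT N t₁ ∩ preT N u := ⟨hmem, hq⟩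
        rw [hAB] at this
        exact this
      rw [fire_apply, if_neg hq2, if_pos hq1]
      omega
    · have hKu : ¬ (u = t₁ ∨ u = t₂) := by tauto
      obtain ⟨M, hM, hen⟩ := hS'.2.2 u (hR.old_mem hu hKu)
      refine ⟨M, hbs hM, hu, ?_⟩
      intro p hp
      exact hen.2 p (by rw [hR.preT_old hKu (hR.old_ne_t' hu)]; exact hp)
  · -- strong safety
    intro u hu M hM hq p hp
    rcases _root_.em (u = t₁) with rfl | hne1
    · refine hSS' t' hR.t'_mem M (hfs0 M hM) ?_ p ?_
      · intro q hq'
        rw [hpost'] at hq'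
        exact hq q hq'
      · rw [hpre']
        exact hp
    rcases _root_.em (u = t₂) with rfl | hne2
    · -- p ∈ preT N t₂ = postT N t₁ ; firing t' would make it ≥ 2
      have hen' : Enabled N' M t' := by
        refine ⟨hR.t'_mem, ?_⟩
        intro q hq'
        rw [hpre', hA] at hq'
        exact hq q hq'
      have hX : Reach N' (mark {pi}) (fire N' t' M) :=
        reach_trans (hfs0 M hM) (reach_single hen')
      have hsafe := hS'.1 _ hX p
      have hp1 : p ∈ postT N' t' := by rw [hpost', hB]; exact hp
      have hp2 : p ∉ preT N' t' := by
        rw [hpre']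
        intro hmem
        have : p ∈ preT N t₁ ∩ preT N u := ⟨hmem, hp⟩
        rw [hAB] at this
        exact this
      rw [fire_apply, if_neg hp2, if_pos hp1] at hsafe
      omega
    · have hKu : ¬ (u = t₁ ∨ u = t₂) := by tauto
      refine hSS' u (hR.old_mem hu hKu) M (hfs0 M hM) ?_ p ?_
      · intro q hq'
        rw [hR.postT_old hKu (hR.old_ne_t' hu)] at hq'
        exact hq q hq'
      · rw [hR.preT_old hKu (hR.old_ne_t' hu)]
        exact hp
  · -- unfire
    intro u hu M hM hq
    rcases _root_.em (u = t₁) with rfl | hne1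
    · have hq' : ∀ q ∈ postT N' t', 0 < M q := by
        intro q hq'
        rw [hpost'] at hq'
        exact hq q hq'
      have hr := hUF' t' hR.t'_mem M (hfs0 M hM) hq'
      have heq : unfire N u M = unfire N' t' M := by
        unfold unfire; rw [hpre', hpost']
      rw [heq]
      exact hbs hr
    rcases _root_.em (u = t₂) with rfl | hne2
    · have hen' : Enabled N' M t' := by
        refine ⟨hR.t'_mem, ?_⟩
        intro q hq'
        rw [hpre', hA] at hq'
        exact hq q hq'
      have heq : unfire N u M = fire N' t' M := by
        unfold unfire fire
        rw [hpre', hpost', hA, hB]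
      rw [heq]
      exact hbs (reach_trans (hfs0 M hM) (reach_single hen'))
    · have hKu : ¬ (u = t₁ ∨ u = t₂) := by tauto
      have hq' : ∀ q ∈ postT N' u, 0 < M q := by
        intro q hq'
        rw [hR.postT_old hKu (hR.old_ne_t' hu)] at hq'
        exact hq q hq'
      have hr := hUF' u (hR.old_mem hu hKu) M (hfs0 M hM) hq'
      have heq : unfire N u M = unfire N' u M := by
        unfold unfire
        rw [hR.preT_old hKu (hR.old_ne_t' hu), hR.postT_old hKu (hR.old_ne_t' hu)]
      rw [heq]
      exact hbs hr

end CaseLoop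
section CaseSeq

variable {P T A : Type}

/-- Mid-chain marking built from a base marking `M`. -/
noncomputable def seqSt (N : LPNet P T A) (t : ℕ → T) (M : P → ℕ) (k : ℕ) : P → ℕ :=
  fun p => M p - (if p ∈ preT N (t 0) then 1 else 0) +
    (if p ∈ postT N (t k) then 1 else 0)

lemma seqSt_apply (N : LPNet P T A) (t : ℕ → T) (M : P → ℕ) (k : ℕ) (p : P) :
    seqSt N t M k p = M p - (if p ∈ preT N (t 0) then 1 else 0) +
      (if p ∈ postT N (t k) then 1 else 0) := rfl

/-- The rolled-back marking `M₁ + •t₀`. -/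
noncomputable def seqW (N : LPNet P T A) (t : ℕ → T) (M₁ : P → ℕ) : P → ℕ :=
  fun p => M₁ p + (if p ∈ preT N (t 0) then 1 else 0)

lemma seqW_apply (N : LPNet P T A) (t : ℕ → T) (M₁ : P → ℕ) (p : P) :
    seqW N t M₁ p = M₁ p + (if p ∈ preT N (t 0) then 1 else 0) := rfl

/-- The mid-chain marking `M₁ + t_k•`. -/
noncomputable def seqMid (N : LPNet P T A) (t : ℕ → T) (M₁ : P → ℕ) (k : ℕ) : P → ℕ :=
  fun p => M₁ p + (if p ∈ postT N (t k) then 1 else 0)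

lemma seqMid_apply (N : LPNet P T A) (t : ℕ → T) (M₁ : P → ℕ) (k : ℕ) (p : P) :
    seqMid N t M₁ k p = M₁ p + (if p ∈ postT N (t k) then 1 else 0) := rfl

/-- Invariant for the reachable markings of the unreduced net in the
`→`-case. -/
def seqRS (N N' : LPNet P T A) (pi : P) (n : ℕ) (t : ℕ → T) (M : P → ℕ) : Prop :=
  Reach N' (mark {pi}) M ∨
  ∃ k, k + 1 < n ∧ ∃ M₁ : P → ℕ,
    (∀ p i, i + 1 < n → p ∈ postT N (t i) → M₁ p = 0) ∧
    Reach N' (mark {pi}) (seqW N t M₁) ∧ M = seqMid N t M₁ k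

variable {N N' : LPNet P T A} {pi po : P} {n : ℕ} {t : ℕ → T} {t' : T}

lemma seq_good (hP : SeqPattern N n t) (hRd : SeqReduced N N' n t t')
    (hI : NInv N pi po) (hG : Good N' pi po) : Good N pi po := by
  obtain ⟨hS', hSS', hUF'⟩ := hG
  have hR := red_of_seq hP hRd
  obtain ⟨hn2, htr, hinj, hchain, hQenv, -⟩ := hP
  have f_pre' : preT N' t' = preT N (t 0) := hR.preT_t' hI
  have f_post' : postT N' t' = postT N (t (n - 1)) := hR.postT_t' hI
  have fQpre : ∀ i, i + 1 < n → postT N (t i) = preT N (t (i + 1)) :=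
    fun i hi => (hchain i hi).2
  have fQne : ∀ i, i + 1 < n → (postT N (t i)).Nonempty := fun i hi => (hchain i hi).1
  have fPre0ne : (preT N (t 0)).Nonempty := (hI.2.2.2.2 (t 0) (htr 0 (by omega))).1
  have fQdisj : ∀ i, i + 1 < n → ∀ j, j + 1 < n → i ≠ j →
      ∀ p, p ∈ postT N (t i) → p ∈ postT N (t j) → False := by
    intro i hi j hj hij p hpi hpj
    have h1 := (hQenv i hi p hpi).1
    have h2 := (hQenv j hj p hpj).1
    have hm : t i ∈ preP N p := by rw [h1]; rfl
    rw [h2] at hm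
    exact hij (hinj i (by omega) j (by omega) hm)
  have fPreQ : ∀ p ∈ preT N (t 0), ∀ i, i + 1 < n → p ∉ postT N (t i) := by
    intro p hp i hi hq
    have h2 := (hQenv i hi p hq).2
    have hm : t 0 ∈ postP N p := hp
    rw [h2] at hm
    have := hinj 0 (by omega) (i + 1) hi hm
    omega
  have fPostQ : ∀ p ∈ postT N (t (n - 1)), ∀ i, i + 1 < n → p ∉ postT N (t i) := by
    intro p hp i hi hq
    have h1 := (hQenv i hi p hq).1
    have hm : t (n - 1) ∈ preP N p := hp
    rw [h1] at hm
    have := hinj (n - 1) (by omega) i (by omega) hm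
    omega
  have fpreO : ∀ u, ¬ (∃ i < n, u = t i) → ∀ p ∈ preT N u,
      ∀ i, i + 1 < n → p ∉ postT N (t i) := by
    intro u hKu p hp i hi hq
    have h2 := (hQenv i hi p hq).2
    have hm : u ∈ postP N p := hp
    rw [h2] at hm
    exact hKu ⟨i + 1, hi, hm⟩
  have fpostO : ∀ u, ¬ (∃ i < n, u = t i) → ∀ p ∈ postT N u,
      ∀ i, i + 1 < n → p ∉ postT N (t i) := by
    intro u hKu p hp i hi hq
    have h1 := (hQenv i hi p hq).1
    have hm : u ∈ preP N p := hp
    rw [h1] at hm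
    exact hKu ⟨i, by omega, hm⟩
  -- chain stepping in N
  have fstep : ∀ (M : P → ℕ) k, k + 1 < n →
      fire N (t (k + 1)) (seqSt N t M k) = seqSt N t M (k + 1) := by
    intro M k hk
    funext p
    rw [fire_apply, ← fQpre k hk, seqSt_apply, seqSt_apply]
    by_cases h1 : p ∈ postT N (t k) <;> by_cases h2 : p ∈ preT N (t 0) <;>
      by_cases h3 : p ∈ postT N (t (k + 1))
    all_goals simp only [h1, h2, h3, if_true, if_false]
    all_goals omega
  have fen : ∀ (M : P → ℕ) k, k + 1 < n → Enabled N (seqSt N t M k) (t (k + 1)) := by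
    intro M k hk
    refine ⟨htr (k + 1) hk, ?_⟩
    intro p hp
    rw [← fQpre k hk] at hp
    rw [seqSt_apply, if_pos hp]
    omega
  have fclimb : ∀ (M : P → ℕ) (d k : ℕ), k + d + 1 ≤ n →
      Reach N (seqSt N t M k) (seqSt N t M (k + d)) := by
    intro M d
    induction d with
    | zero => intro k _; exact reach_rfl _ _
    | succ d ih =>
      intro k hk
      have hk1 : k + 1 < n := by omega
      have h1 : Reach N (seqSt N t M k) (seqSt N t M (k + 1)) := by
        rw [← fstep M k hk1]
        exact reach_single (fen M k hk1)
      have h2 := ih (k + 1) (by omega)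
      have he : k + 1 + d = k + (d + 1) := by omega
      rw [he] at h2
      exact reach_trans h1 h2
  have fstart : ∀ (M : P → ℕ), (∀ p ∈ preT N (t 0), 0 < M p) →
      Reach N M (seqSt N t M 0) := by
    intro M hM
    have hen : Enabled N M (t 0) := ⟨htr 0 (by omega), hM⟩
    have he : fire N (t 0) M = seqSt N t M 0 := by
      funext p; rw [fire_apply, seqSt_apply]
    rw [← he]
    exact reach_single hen
  have fto : ∀ (M : P → ℕ) k j, k ≤ j → j + 1 ≤ n →
      Reach N (seqSt N t M k) (seqSt N t M j) := by
    intro M k j hkj hj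
    obtain ⟨d, hd⟩ : ∃ d, k + d = j := ⟨j - k, by omega⟩
    have := fclimb M d k (by omega)
    rw [hd] at this
    exact this
  have ffire' : ∀ M : P → ℕ, fire N' t' M = seqSt N t M (n - 1) := by
    intro M
    funext p
    rw [fire_apply, f_pre', f_post', seqSt_apply]
  have hbs : ∀ {M M'' : P → ℕ}, Reach N' M M'' → Reach N M M'' := by
    refine hR.bsim ?_
    intro M hen
    rw [ffire' M]
    refine reach_trans (fstart M ?_) (fto M 0 (n - 1) (by omega) (by omega))
    intro p hp
    exact hen.2 p (by rw [f_pre']; exact hp)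
  -- N'-reachable markings are zero on the interconnecting places
  have hZQ : ∀ M, Reach N' (mark {pi}) M → ∀ p i, i + 1 < n →
      p ∈ postT N (t i) → M p = 0 := by
    have key : ∀ (σ : List T) (M M'' : P → ℕ), FSeq N' M σ M'' →
        (∀ p i, i + 1 < n → p ∈ postT N (t i) → M p = 0) →
        (∀ p i, i + 1 < n → p ∈ postT N (t i) → M'' p = 0) := by
      intro σ
      induction σ with
      | nil => intro M M'' h hz; cases h; exact hz
      | cons u σ ih =>
        intro M M'' h hz
        cases h with
        | cons _ _ _ _ hen hs =>
          refine ih _ _ hs ?_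
          intro p i hi hp
          have hpre0 : p ∉ preT N' u := by
            by_cases hu : u = t'
            · subst hu; rw [f_pre']; exact fun hc => fPreQ p hc i hi hp
            · rcases (hR.mem_trans' u).1 hen.1 with ⟨hu', hKu⟩ | hc
              · rw [hR.preT_old hKu hu]
                exact fun hc => fpreO u hKu p hc i hi hp
              · exact absurd hc hu
          have hpost0 : p ∉ postT N' u := by
            by_cases hu : u = t'
            · subst hu; rw [f_post']; exact fun hc => fPostQ p hc i hi hp
            · rcases (hR.mem_trans' u).1 hen.1 with ⟨hu', hKu⟩ | hc
              · rw [hR.postT_old hKu hu]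
                exact fun hc => fpostO u hKu p hc i hi hp
              · exact absurd hc hu
          rw [fire_apply, if_neg hpre0, if_neg hpost0, hz p i hi hp]
    rintro M ⟨σ, h⟩ p i hi hp
    refine key σ _ _ h ?_ p i hi hp
    intro q j hj hq
    rw [mark_apply, if_neg ?_]
    intro hc
    rw [Set.mem_singleton_iff] at hc
    subst hc
    exact hI.2.2.1 (t j) hq
  have hWst : ∀ (M₁ : P → ℕ) k, seqSt N t (seqW N t M₁) k = seqMid N t M₁ k := by
    intro M₁ k
    funext p
    rw [seqSt_apply, seqW_apply, seqMid_apply]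
    by_cases h1 : p ∈ preT N (t 0) <;> simp only [h1, if_true, if_false] <;> omega
  -- every RS-marking is reachable in N
  have hRtoR : ∀ M, seqRS N N' pi n t M → Reach N (mark {pi}) M := by
    intro M hM
    rcases hM with h | ⟨k, hk, M₁, hz, hWr, rfl⟩
    · exact hbs h
    · have h1 : Reach N (mark {pi}) (seqW N t M₁) := hbs hWr
      have h2 : Reach N (seqW N t M₁) (seqMid N t M₁ k) := by
        rw [← hWst M₁ k]
        refine reach_trans (fstart _ ?_) (fto _ 0 k (by omega) (by omega))
        intro p hp
        rw [seqW_apply, if_pos hp]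
        omega
      exact reach_trans h1 h2
  -- closure of RS under firing in N
  have hclose : ∀ M u, seqRS N N' pi n t M → Enabled N M u →
      seqRS N N' pi n t (fire N u M) := by
    intro M u hM hen
    by_cases hKu : ∃ i < n, u = t i
    · obtain ⟨i, hi, rfl⟩ := hKu
      rcases hM with h | ⟨k, hk, M₁, hz, hWr, rfl⟩
      · -- from N'-reachable markings only t 0 can fire
        rcases Nat.eq_zero_or_pos i with rfl | hipos
        · refine Or.inr ⟨0, by omega,
            (fun p => M p - (if p ∈ preT N (t 0) then 1 else 0)), ?_, ?_, ?_⟩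
          · intro p j hj hp
            beta_reduce
            rw [hZQ M h p j hj hp, Nat.zero_sub]
          · have he : seqW N t (fun p => M p - (if p ∈ preT N (t 0) then 1 else 0)) = M := by
              funext p
              rw [seqW_apply]
              by_cases h1 : p ∈ preT N (t 0) <;> simp only [h1, if_true, if_false]
              · have := hen.2 p h1; omega
              · omega
            rw [he]
            exact h
          · funext p
            rw [fire_apply, seqMid_apply]
        · exfalso
          have hi1 : (i - 1) + 1 < n := by omega
          obtain ⟨q, hq⟩ := fQne (i - 1) hi1
          have hq' : q ∈ preT N (t i) := by
            have hii : i - 1 + 1 = i := by omega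
            rw [← hii, ← fQpre (i - 1) hi1]
            exact hq
          have h1 := hen.2 q hq'
          rw [hZQ M h q (i - 1) hi1 hq] at h1
          omega
      · -- mid-state
        rcases Nat.eq_zero_or_pos i with rfl | hipos
        · -- t 0 fires again: contradiction with safety of `seqW M₁`
          exfalso
          obtain ⟨q, hq⟩ := fPre0ne
          have h1 : (0:ℕ) < M₁ q + (if q ∈ postT N (t k) then 1 else 0) := hen.2 q hq
          rw [if_neg (fPreQ q hq k hk)] at h1
          have h2 : M₁ q + (if q ∈ preT N (t 0) then 1 else 0) ≤ 1 := hS'.1 _ hWr q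
          rw [if_pos hq] at h2
          omega
        · by_cases hik : i = k + 1
          · subst hik
            by_cases hklast : k + 1 + 1 < n
            · refine Or.inr ⟨k + 1, hklast, M₁, hz, hWr, ?_⟩
              rw [← hWst M₁ k, ← hWst M₁ (k + 1)]
              exact fstep (seqW N t M₁) k hk
            · -- completion: k + 1 = n - 1
              have hkn : k + 1 = n - 1 := by omega
              refine Or.inl ?_
              have hfin : fire N (t (k + 1)) (seqMid N t M₁ k) = fire N' t' (seqW N t M₁) := by
                rw [ffire' (seqW N t M₁), ← hkn, ← hWst M₁ k]
                exact fstep (seqW N t M₁) k hk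
              rw [hfin]
              refine reach_trans hWr (reach_single ⟨hR.t'_mem, ?_⟩)
              intro p hp
              rw [f_pre'] at hp
              rw [seqW_apply, if_pos hp]
              omega
          · exfalso
            have hi1 : (i - 1) + 1 < n := by omega
            obtain ⟨q, hq⟩ := fQne (i - 1) hi1
            have hq' : q ∈ preT N (t i) := by
              have hii : i - 1 + 1 = i := by omega
              rw [← hii, ← fQpre (i - 1) hi1]
              exact hq
            have h1 : (0:ℕ) < M₁ q + (if q ∈ postT N (t k) then 1 else 0) := hen.2 q hq'
            rw [if_neg (fun hc => fQdisj (i - 1) hi1 k hk (by omega) q hq hc),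
              hz q (i - 1) hi1 hq] at h1
            omega
    · -- old transition
      have hu := hen.1
      have hne' := hR.old_ne_t' hu
      rcases hM with h | ⟨k, hk, M₁, hz, hWr, rfl⟩
      · refine Or.inl ?_
        rw [← hR.fire_old hKu hne' M]
        exact reach_trans h (reach_single (hR.enabled_old hKu hen))
      · -- mid-state: mirror the firing at `seqW M₁`
        have hM₁pre : ∀ p ∈ preT N u, 0 < M₁ p := by
          intro p hp
          have h1 : (0:ℕ) < M₁ p + (if p ∈ postT N (t k) then 1 else 0) := hen.2 p hp
          rw [if_neg (fun hc => fpreO u hKu p hp k hk hc)] at h1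
          exact h1
        have henW : Enabled N' (seqW N t M₁) u := by
          refine ⟨hR.old_mem hu hKu, ?_⟩
          intro p hp
          rw [hR.preT_old hKu hne'] at hp
          have := hM₁pre p hp
          rw [seqW_apply]
          by_cases h3 : p ∈ preT N (t 0) <;> simp only [h3, if_true, if_false] <;> omega
        refine Or.inr ⟨k, hk,
          (fun p => M₁ p - (if p ∈ preT N u then 1 else 0) +
            (if p ∈ postT N u then 1 else 0)), ?_, ?_, ?_⟩
        · intro p j hj hp
          beta_reduce
          rw [if_neg (fun hc => fpreO u hKu p hc j hj hp),
            if_neg (fun hc => fpostO u hKu p hc j hj hp), hz p j hj hp]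
        · have he : seqW N t (fun p => M₁ p - (if p ∈ preT N u then 1 else 0) +
              (if p ∈ postT N u then 1 else 0)) = fire N' u (seqW N t M₁) := by
            funext p
            rw [fire_apply, hR.preT_old hKu hne', hR.postT_old hKu hne',
              seqW_apply, seqW_apply]
            by_cases h1 : p ∈ preT N u
            · have h5 := hM₁pre p h1
              by_cases h2 : p ∈ postT N u <;> by_cases h3 : p ∈ preT N (t 0) <;>
                simp only [h1, h2, h3, if_true, if_false] <;> omega
            · by_cases h2 : p ∈ postT N u <;> by_cases h3 : p ∈ preT N (t 0) <;>
                simp only [h1, h2, h3, if_true, if_false] <;> omega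
          rw [he]
          exact reach_trans hWr (reach_single henW)
        · funext p
          rw [fire_apply, seqMid_apply, seqMid_apply]
          by_cases h1 : p ∈ preT N u
          · have h5 := hM₁pre p h1
            have h6 : p ∉ postT N (t k) := fun hc => fpreO u hKu p h1 k hk hc
            by_cases h2 : p ∈ postT N u <;>
              simp only [h1, h2, h6, if_true, if_false] <;> omega
          · by_cases h2 : p ∈ postT N u <;> by_cases h3 : p ∈ postT N (t k) <;>
              simp only [h1, h2, h3, if_true, if_false] <;> omega
  -- all N-reachable markings satisfy RS
  have hRSall : ∀ M, Reach N (mark {pi}) M → seqRS N N' pi n t M := by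
    have key : ∀ (σ : List T) (M M'' : P → ℕ), FSeq N M σ M'' →
        seqRS N N' pi n t M → seqRS N N' pi n t M'' := by
      intro σ
      induction σ with
      | nil => intro M M'' h hM; cases h; exact hM
      | cons u σ ih =>
        intro M M'' h hM
        cases h with
        | cons _ _ _ _ hen hs => exact ih _ _ hs (hclose M u hM hen)
    rintro M ⟨σ, h⟩
    exact key σ _ _ h (Or.inl (reach_rfl _ _))
  -- helper: in a mid-state where `t_i•` (i+1<n) is fully marked, k = i
  have hdet : ∀ (M₁ : P → ℕ) k, k + 1 < n →
      (∀ p i, i + 1 < n → p ∈ postT N (t i) → M₁ p = 0) →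
      ∀ i, i + 1 < n → (∀ q ∈ postT N (t i), 0 < seqMid N t M₁ k q) → k = i := by
    intro M₁ k hk hz i hi hq
    by_contra hne
    obtain ⟨q, hqQ⟩ := fQne i hi
    have h1 := hq q hqQ
    rw [seqMid_apply, if_neg (fun hc => fQdisj i hi k hk (fun he => hne he.symm) q hqQ hc),
      hz q i hi hqQ] at h1
    omega
  -- helper: a mid-state never has `t_{n-1}•` fully marked
  have hnofull : ∀ (M₁ : P → ℕ) k, k + 1 < n →
      (∀ p i, i + 1 < n → p ∈ postT N (t i) → M₁ p = 0) →
      Reach N' (mark {pi}) (seqW N t M₁) →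
      (∀ q ∈ postT N (t (n - 1)), 0 < seqMid N t M₁ k q) → False := by
    intro M₁ k hk hz hWr hq
    obtain ⟨q0, hq0⟩ := fPre0ne
    have htok : ∀ q ∈ postT N' t', 0 < seqW N t M₁ q := by
      intro q hq'
      rw [f_post'] at hq'
      have h1 := hq q hq'
      rw [seqMid_apply, if_neg (fun hc => fPostQ q hq' k hk hc)] at h1
      rw [seqW_apply]
      by_cases h3 : q ∈ preT N (t 0) <;> simp only [h3, if_true, if_false] <;> omega
    have hzero := hSS' t' hR.t'_mem _ hWr htok q0 (by rw [f_pre']; exact hq0)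
    rw [seqW_apply, if_pos hq0] at hzero
    omega
  refine ⟨⟨?_, ?_, ?_⟩, ?_, ?_⟩
  · -- safety
    intro M hM p
    rcases hRSall M hM with h | ⟨k, hk, M₁, hz, hWr, rfl⟩
    · exact hS'.1 M h p
    · have hsafe := hS'.1 _ hWr p
      rw [seqW_apply] at hsafe
      rw [seqMid_apply]
      by_cases hp : p ∈ postT N (t k)
      · rw [if_pos hp, hz p k hk hp]
      · rw [if_neg hp]
        by_cases hp0 : p ∈ preT N (t 0)
        · rw [if_pos hp0] at hsafe; omega
        · rw [if_neg hp0] at hsafe; omega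
  · -- option to complete
    intro M hM
    rcases hRSall M hM with h | ⟨k, hk, M₁, hz, hWr, rfl⟩
    · exact hbs (hS'.2.1 M h)
    · have h2 : Reach N (seqMid N t M₁ k) (seqSt N t (seqW N t M₁) (n - 1)) := by
        rw [← hWst M₁ k]
        exact fto _ k (n - 1) (by omega) (by omega)
      have hX : Reach N' (mark {pi}) (seqSt N t (seqW N t M₁) (n - 1)) := by
        rw [← ffire' (seqW N t M₁)]
        refine reach_trans hWr (reach_single ⟨hR.t'_mem, ?_⟩)
        intro p hp
        rw [f_pre'] at hp
        rw [seqW_apply, if_pos hp]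
        omega
      exact reach_trans h2 (hbs (hS'.2.1 _ hX))
  · -- no dead transitions
    intro u hu
    by_cases hKu : ∃ i < n, u = t i
    · obtain ⟨i, hi, rfl⟩ := hKu
      obtain ⟨M, hM, hen⟩ := hS'.2.2 t' hR.t'_mem
      have htok : ∀ p ∈ preT N (t 0), 0 < M p := fun p hp =>
        hen.2 p (by rw [f_pre']; exact hp)
      have hMreach : Reach N (mark {pi}) M := hbs hM
      rcases Nat.eq_zero_or_pos i with rfl | hipos
      · exact ⟨M, hMreach, htr 0 (by omega), htok⟩
      · have hi1 : (i - 1) + 1 < n := by omega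
        refine ⟨seqSt N t M (i - 1), ?_, ?_⟩
        · exact reach_trans hMreach (reach_trans (fstart M htok)
            (fto M 0 (i - 1) (by omega) (by omega)))
        · have hfe := fen M (i - 1) hi1
          have hii : i - 1 + 1 = i := by omega
          rw [hii] at hfe
          exact hfe
    · obtain ⟨M, hM, hen⟩ := hS'.2.2 u (hR.old_mem hu hKu)
      refine ⟨M, hbs hM, hu, ?_⟩
      intro p hp
      exact hen.2 p (by rw [hR.preT_old hKu (hR.old_ne_t' hu)]; exact hp)
  · -- strong safety
    intro u hu M hM hq p hp
    by_cases hKu : ∃ i < n, u = t i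
    · obtain ⟨i, hi, rfl⟩ := hKu
      by_cases hilast : i + 1 < n
      · rcases hRSall M hM with h | ⟨k, hk, M₁, hz, hWr, rfl⟩
        · exfalso
          obtain ⟨q, hqQ⟩ := fQne i hilast
          have h1 := hq q hqQ
          rw [hZQ M h q i hilast hqQ] at h1
          omega
        · have hki : k = i := hdet M₁ k hk hz i hilast hq
          subst hki
          rcases Nat.eq_zero_or_pos k with rfl | hkpos
          · have hsafe := hS'.1 _ hWr p
            rw [seqW_apply, if_pos hp] at hsafe
            rw [seqMid_apply, if_neg (fPreQ p hp 0 hilast)]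
            omega
          · have hk1 : (k - 1) + 1 < n := by omega
            have hii : k - 1 + 1 = k := by omega
            have hpQ : p ∈ postT N (t (k - 1)) := by
              rw [fQpre (k - 1) hk1, hii]
              exact hp
            rw [seqMid_apply, if_neg (fun hc => fQdisj (k - 1) hk1 k hk (by omega) p hpQ hc),
              hz p (k - 1) hk1 hpQ]
      · have hin : i = n - 1 := by omega
        subst hin
        rcases hRSall M hM with h | ⟨k, hk, M₁, hz, hWr, rfl⟩
        · have hn22 : (n - 2) + 1 < n := by omega
          have hii : n - 2 + 1 = n - 1 := by omega
          have hpQ : p ∈ postT N (t (n - 2)) := by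
            rw [fQpre (n - 2) hn22, hii]
            exact hp
          exact hZQ M h p (n - 2) hn22 hpQ
        · exact absurd (hnofull M₁ k hk hz hWr hq) (fun hc => hc)
    · rcases hRSall M hM with h | ⟨k, hk, M₁, hz, hWr, rfl⟩
      · refine hSS' u (hR.old_mem hu hKu) M h ?_ p
          (by rw [hR.preT_old hKu (hR.old_ne_t' hu)]; exact hp)
        intro q hq'
        rw [hR.postT_old hKu (hR.old_ne_t' hu)] at hq'
        exact hq q hq'
      · have htokW : ∀ q ∈ postT N' u, 0 < seqW N t M₁ q := by
          intro q hq'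
          rw [hR.postT_old hKu (hR.old_ne_t' hu)] at hq'
          have h1 := hq q hq'
          rw [seqMid_apply, if_neg (fun hc => fpostO u hKu q hq' k hk hc)] at h1
          rw [seqW_apply]
          by_cases hq0 : q ∈ preT N (t 0) <;> simp only [hq0, if_true, if_false] <;> omega
        have hzero := hSS' u (hR.old_mem hu hKu) _ hWr htokW p
          (by rw [hR.preT_old hKu (hR.old_ne_t' hu)]; exact hp)
        rw [seqW_apply] at hzero
        rw [seqMid_apply, if_neg (fun hc => fpreO u hKu p hp k hk hc)]
        by_cases hp0 : p ∈ preT N (t 0)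
        · rw [if_pos hp0] at hzero; omega
        · rw [if_neg hp0] at hzero; omega
  · -- un-fireability
    intro u hu M hM hq
    by_cases hKu : ∃ i < n, u = t i
    · obtain ⟨i, hi, rfl⟩ := hKu
      by_cases hilast : i + 1 < n
      · rcases hRSall M hM with h | ⟨k, hk, M₁, hz, hWr, rfl⟩
        · exfalso
          obtain ⟨q, hqQ⟩ := fQne i hilast
          have h1 := hq q hqQ
          rw [hZQ M h q i hilast hqQ] at h1
          omega
        · have hki : k = i := hdet M₁ k hk hz i hilast hq
          subst hki
          rcases Nat.eq_zero_or_pos k with rfl | hkpos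
          · have heq : unfire N (t 0) (seqMid N t M₁ 0) = seqW N t M₁ := by
              funext p
              rw [unfire_apply, seqMid_apply, seqW_apply]
              by_cases h1 : p ∈ postT N (t 0) <;> by_cases h2 : p ∈ preT N (t 0) <;>
                simp only [h1, h2, if_true, if_false] <;> omega
            rw [heq]
            exact hbs hWr
          · have hk1 : (k - 1) + 1 < n := by omega
            have hii : k - 1 + 1 = k := by omega
            have heq : unfire N (t k) (seqMid N t M₁ k) = seqMid N t M₁ (k - 1) := by
              funext p
              rw [unfire_apply, seqMid_apply, seqMid_apply]
              have hpre : preT N (t k) = postT N (t (k - 1)) := by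
                rw [fQpre (k - 1) hk1, hii]
              rw [hpre]
              by_cases h1 : p ∈ postT N (t k) <;> by_cases h2 : p ∈ postT N (t (k - 1)) <;>
                simp only [h1, h2, if_true, if_false] <;> omega
            rw [heq]
            exact hRtoR _ (Or.inr ⟨k - 1, by omega, M₁, hz, hWr, rfl⟩)
      · have hin : i = n - 1 := by omega
        subst hin
        rcases hRSall M hM with h | ⟨k, hk, M₁, hz, hWr, rfl⟩
        · have htok : ∀ q ∈ postT N' t', 0 < M q := by
            intro q hq'
            rw [f_post'] at hq'
            exact hq q hq'
          have hr := hUF' t' hR.t'_mem M h htok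
          have hWeq : unfire N' t' M =
              seqW N t (fun p => M p - (if p ∈ postT N (t (n - 1)) then 1 else 0)) := by
            funext p
            rw [unfire_apply, f_pre', f_post', seqW_apply]
          have hmid : unfire N (t (n - 1)) M =
              seqMid N t (fun p => M p - (if p ∈ postT N (t (n - 1)) then 1 else 0))
                (n - 2) := by
            funext p
            rw [unfire_apply, seqMid_apply]
            have hpre : preT N (t (n - 1)) = postT N (t (n - 2)) := by
              have hii : n - 2 + 1 = n - 1 := by omega
              rw [fQpre (n - 2) (by omega), hii]
            rw [hpre]
          rw [hmid]
          refine hRtoR _ (Or.inr ⟨n - 2, by omega, _, ?_, ?_, rfl⟩)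
          · intro p j hj hp
            beta_reduce
            have h0 := hZQ M h p j hj hp
            simp only [h0, Nat.zero_sub]
          · rw [← hWeq]
            exact hr
        · exact absurd (hnofull M₁ k hk hz hWr hq) (fun hc => hc)
    · rcases hRSall M hM with h | ⟨k, hk, M₁, hz, hWr, rfl⟩
      · have htok : ∀ q ∈ postT N' u, 0 < M q := by
          intro q hq'
          rw [hR.postT_old hKu (hR.old_ne_t' hu)] at hq'
          exact hq q hq'
        have hr := hUF' u (hR.old_mem hu hKu) M h htok
        have heq : unfire N u M = unfire N' u M := by
          unfold unfire
          rw [hR.preT_old hKu (hR.old_ne_t' hu), hR.postT_old hKu (hR.old_ne_t' hu)]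
        rw [heq]
        exact hbs hr
      · have hdisj : ∀ p, p ∈ preT N (t 0) → p ∈ postT N u → False := by
          intro p hp0 hpu
          have h1 := hq p hpu
          rw [seqMid_apply, if_neg (fPreQ p hp0 k hk)] at h1
          have hsafe := hS'.1 _ hWr p
          rw [seqW_apply, if_pos hp0] at hsafe
          omega
        have htokW : ∀ q ∈ postT N' u, 0 < seqW N t M₁ q := by
          intro q hq'
          rw [hR.postT_old hKu (hR.old_ne_t' hu)] at hq'
          have h1 := hq q hq'
          rw [seqMid_apply, if_neg (fun hc => fpostO u hKu q hq' k hk hc)] at h1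
          rw [seqW_apply]
          by_cases hq0 : q ∈ preT N (t 0) <;> simp only [hq0, if_true, if_false] <;> omega
        have hM₁pos : ∀ q ∈ postT N u, 0 < M₁ q := by
          intro q hq'
          have h1 := hq q hq'
          rw [seqMid_apply, if_neg (fun hc => fpostO u hKu q hq' k hk hc)] at h1
          exact h1
        have hr := hUF' u (hR.old_mem hu hKu) _ hWr htokW
        have hWeq : unfire N' u (seqW N t M₁) =
            seqW N t (fun p => M₁ p - (if p ∈ postT N u then 1 else 0) +
              (if p ∈ preT N u then 1 else 0)) := by
          funext p
          rw [unfire_apply, hR.preT_old hKu (hR.old_ne_t' hu),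
            hR.postT_old hKu (hR.old_ne_t' hu), seqW_apply, seqW_apply]
          by_cases h1 : p ∈ postT N u
          · have h5 : p ∉ preT N (t 0) := fun hc => hdisj p hc h1
            have h6 := hM₁pos p h1
            by_cases h2 : p ∈ preT N u <;>
              simp only [h1, h2, h5, if_true, if_false] <;> omega
          · by_cases h2 : p ∈ preT N u <;> by_cases h3 : p ∈ preT N (t 0) <;>
              simp only [h1, h2, h3, if_true, if_false] <;> omega
        have hmid2 : unfire N u (seqMid N t M₁ k) =
            seqMid N t (fun p => M₁ p - (if p ∈ postT N u then 1 else 0) +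
              (if p ∈ preT N u then 1 else 0)) k := by
          funext p
          rw [unfire_apply, seqMid_apply, seqMid_apply]
          by_cases h1 : p ∈ postT N u
          · have h6 := hM₁pos p h1
            have h7 : p ∉ postT N (t k) := fun hc => fpostO u hKu p h1 k hk hc
            by_cases h2 : p ∈ preT N u <;>
              simp only [h1, h2, h7, if_true, if_false] <;> omega
          · by_cases h2 : p ∈ preT N u <;> by_cases h3 : p ∈ postT N (t k) <;>
              simp only [h1, h2, h3, if_true, if_false] <;> omega
        rw [hmid2]
        refine hRtoR _ (Or.inr ⟨k, hk, _, ?_, ?_, rfl⟩)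
        · intro p j hj hp
          beta_reduce
          rw [if_neg (fun hc => fpostO u hKu p hc j hj hp),
            if_neg (fun hc => fpreO u hKu p hc j hj hp), hz p j hj hp]
        · rw [← hWeq]
          exact hr

end CaseSeq
section CasePar

variable {P T A : Type}

/-- Sum of the pre-set indicators of `t i`, `i ∈ S`. -/
noncomputable def parA (N : LPNet P T A) (t : ℕ → T) (S : Finset ℕ) : P → ℕ :=
  fun p => ∑ i ∈ S, (preT N (t i)).indicator 1 p

/-- Sum of the post-set indicators of `t i`, `i ∈ S`. -/
noncomputable def parB (N : LPNet P T A) (t : ℕ → T) (S : Finset ℕ) : P → ℕ :=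
  fun p => ∑ i ∈ S, (postT N (t i)).indicator 1 p

/-- The rolled-back marking in the `∧`-case. -/
noncomputable def parBk (N : LPNet P T A) (t : ℕ → T) (S : Finset ℕ) (M : P → ℕ) :
    P → ℕ := fun p => M p + parA N t S p - parB N t S p

lemma parBk_apply (N : LPNet P T A) (t : ℕ → T) (S : Finset ℕ) (M : P → ℕ) (p : P) :
    parBk N t S M p = M p + parA N t S p - parB N t S p := rfl

lemma parA_apply (N : LPNet P T A) (t : ℕ → T) (S : Finset ℕ) (p : P) :
    parA N t S p = ∑ i ∈ S, (if p ∈ preT N (t i) then 1 else 0) := by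
  unfold parA
  exact Finset.sum_congr rfl (fun i _ => indVal _ _)

lemma parB_apply (N : LPNet P T A) (t : ℕ → T) (S : Finset ℕ) (p : P) :
    parB N t S p = ∑ i ∈ S, (if p ∈ postT N (t i) then 1 else 0) := by
  unfold parB
  exact Finset.sum_congr rfl (fun i _ => indVal _ _)

lemma parA_empty (N : LPNet P T A) (t : ℕ → T) (p : P) : parA N t ∅ p = 0 := by
  rw [parA_apply, Finset.sum_empty]

lemma parB_empty (N : LPNet P T A) (t : ℕ → T) (p : P) : parB N t ∅ p = 0 := by
  rw [parB_apply, Finset.sum_empty]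

lemma parBk_empty (N : LPNet P T A) (t : ℕ → T) (M : P → ℕ) : parBk N t ∅ M = M := by
  funext p
  rw [parBk_apply, parA_empty, parB_empty]
  omega

lemma parA_insert (N : LPNet P T A) (t : ℕ → T) {S : Finset ℕ} {i : ℕ} (h : i ∉ S)
    (p : P) : parA N t (insert i S) p =
      (if p ∈ preT N (t i) then 1 else 0) + parA N t S p := by
  rw [parA_apply, parA_apply, Finset.sum_insert h]

lemma parB_insert (N : LPNet P T A) (t : ℕ → T) {S : Finset ℕ} {i : ℕ} (h : i ∉ S)
    (p : P) : parB N t (insert i S) p =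
      (if p ∈ postT N (t i) then 1 else 0) + parB N t S p := by
  rw [parB_apply, parB_apply, Finset.sum_insert h]

lemma parA_erase (N : LPNet P T A) (t : ℕ → T) {S : Finset ℕ} {i : ℕ} (h : i ∈ S)
    (p : P) : parA N t S p =
      (if p ∈ preT N (t i) then 1 else 0) + parA N t (S.erase i) p := by
  rw [parA_apply, parA_apply, ← Finset.add_sum_erase _ _ h]

lemma parB_erase (N : LPNet P T A) (t : ℕ → T) {S : Finset ℕ} {i : ℕ} (h : i ∈ S)
    (p : P) : parB N t S p =
      (if p ∈ postT N (t i) then 1 else 0) + parB N t (S.erase i) p := by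
  rw [parB_apply, parB_apply, ← Finset.add_sum_erase _ _ h]

lemma parA_zero (N : LPNet P T A) (t : ℕ → T) {S : Finset ℕ} {p : P}
    (h : ∀ i ∈ S, p ∉ preT N (t i)) : parA N t S p = 0 := by
  rw [parA_apply]
  exact Finset.sum_eq_zero (fun i hi => if_neg (h i hi))

lemma parB_zero (N : LPNet P T A) (t : ℕ → T) {S : Finset ℕ} {p : P}
    (h : ∀ i ∈ S, p ∉ postT N (t i)) : parB N t S p = 0 := by
  rw [parB_apply]
  exact Finset.sum_eq_zero (fun i hi => if_neg (h i hi))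

/-- Invariant for the reachable markings of the unreduced net in the
`∧`-case. -/
def parRS (N N' : LPNet P T A) (pi : P) (n : ℕ) (t : ℕ → T) (M : P → ℕ) : Prop :=
  ∃ S : Finset ℕ, (∀ i ∈ S, i < n) ∧
    Reach N' (mark {pi}) (parBk N t S M) ∧
    (∀ i < n, ∀ q ∈ postT N (t i), M q = if i ∈ S then 1 else 0)

end CasePar
section CasePar2

variable {P T A : Type} {N N' : LPNet P T A} {pi po : P} {n : ℕ} {t : ℕ → T} {t' : T}

lemma par_good (hP : ParPattern N n t) (hRd : ParReduced N N' n t t')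
    (hI : NInv N pi po) (hG : Good N' pi po) : Good N pi po := by
  obtain ⟨hS', hSS', hUF'⟩ := hG
  have hR := red_of_par hP hRd
  obtain ⟨hn2, htr, hinj, hpreD, hpostD, hp3, hp4, hp5, hp6, hp7, hp8, hp9, hp10⟩ := hP
  have f_pre' : preT N' t' = {p | ∃ i < n, p ∈ preT N (t i)} := hR.preT_t' hI
  have f_post' : postT N' t' = {p | ∃ i < n, p ∈ postT N (t i)} := hR.postT_t' hI
  have hPrene : ∀ i, i < n → (preT N (t i)).Nonempty :=
    fun i hi => (hI.2.2.2.2 _ (htr i hi)).1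
  have hPostne : ∀ i, i < n → (postT N (t i)).Nonempty :=
    fun i hi => (hI.2.2.2.2 _ (htr i hi)).2
  have gPrePost : ∀ i, i < n → ∀ p ∈ preT N (t i), ∀ j, j < n →
      p ∉ postT N (t j) := by
    intro i hi p hp j hj hc
    have h3 := hp3 i hi p hp
    have h7 := hp7 p ⟨j, hj, hc⟩
    have hm : t i ∈ postP N p ∩ {u | ∃ i < n, u = t i} := ⟨by rw [h3]; rfl, ⟨i, hi, rfl⟩⟩
    rw [h7] at hm
    exact hm
  have gOldPre : ∀ u, ¬ (∃ i < n, u = t i) → ∀ p ∈ preT N u, ∀ i, i < n →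
      p ∉ preT N (t i) := by
    intro u hKu p hp i hi hc
    have h3 := hp3 i hi p hc
    have hm : u ∈ postP N p := hp
    rw [h3] at hm
    exact hKu ⟨i, hi, hm⟩
  have gOldPost : ∀ u, ¬ (∃ i < n, u = t i) → ∀ p ∈ postT N u, ∀ i, i < n →
      p ∉ postT N (t i) := by
    intro u hKu p hp i hi hc
    have h4 := hp4 i hi p hc
    have hm : u ∈ preP N p := hp
    rw [h4] at hm
    exact hKu ⟨i, hi, hm⟩
  have gJoin : ∀ u, ∀ p, p ∈ preT N u → ∀ i, i < n → p ∈ postT N (t i) →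
      ∀ j, j < n → ∀ q ∈ postT N (t j), q ∈ preT N u := by
    intro u p hpu i hi hpi j hj q hq
    have h8 := hp8 p ⟨i, hi, hpi⟩ q ⟨j, hj, hq⟩
    have hm : u ∈ postP N p := hpu
    rw [h8] at hm
    exact hm
  -- value lemmas
  have pAmem : ∀ (S : Finset ℕ), (∀ i ∈ S, i < n) → ∀ j, j < n → ∀ p ∈ preT N (t j),
      parA N t S p = if j ∈ S then 1 else 0 := by
    intro S hS j hj p hp
    by_cases hjS : j ∈ S
    · have h2 : parA N t (S.erase j) p = 0 := by
        refine parA_zero N t ?_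
        intro i hi hc
        have hij : i ≠ j := (Finset.mem_erase.1 hi).1
        have hm : p ∈ preT N (t i) ∩ preT N (t j) := ⟨hc, hp⟩
        rw [hpreD i (hS i (Finset.mem_erase.1 hi).2) j hj hij] at hm
        exact hm
      rw [if_pos hjS, parA_erase N t hjS p, if_pos hp, h2]
    · rw [if_neg hjS]
      refine parA_zero N t ?_
      intro i hi hc
      have hij : i ≠ j := fun he => hjS (he ▸ hi)
      have hm : p ∈ preT N (t i) ∩ preT N (t j) := ⟨hc, hp⟩
      rw [hpreD i (hS i hi) j hj hij] at hm
      exact hm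
  have pBmem : ∀ (S : Finset ℕ), (∀ i ∈ S, i < n) → ∀ j, j < n → ∀ p ∈ postT N (t j),
      parB N t S p = if j ∈ S then 1 else 0 := by
    intro S hS j hj p hp
    by_cases hjS : j ∈ S
    · have h2 : parB N t (S.erase j) p = 0 := by
        refine parB_zero N t ?_
        intro i hi hc
        have hij : i ≠ j := (Finset.mem_erase.1 hi).1
        have hm : p ∈ postT N (t i) ∩ postT N (t j) := ⟨hc, hp⟩
        rw [hpostD i (hS i (Finset.mem_erase.1 hi).2) j hj hij] at hm
        exact hm
      rw [if_pos hjS, parB_erase N t hjS p, if_pos hp, h2]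
    · rw [if_neg hjS]
      refine parB_zero N t ?_
      intro i hi hc
      have hij : i ≠ j := fun he => hjS (he ▸ hi)
      have hm : p ∈ postT N (t i) ∩ postT N (t j) := ⟨hc, hp⟩
      rw [hpostD i (hS i hi) j hj hij] at hm
      exact hm
  -- iterated firing of a set of the t i
  have pfire : ∀ (S : Finset ℕ), (∀ i ∈ S, i < n) → ∀ M : P → ℕ,
      (∀ i ∈ S, ∀ p ∈ preT N (t i), 0 < M p) →
      Reach N M (fun p => M p - parA N t S p + parB N t S p) := by
    intro S
    induction S using Finset.induction_on with
    | empty =>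
      intro _ M _
      have he : (fun p => M p - parA N t ∅ p + parB N t ∅ p) = M := by
        funext p; rw [parA_empty, parB_empty]; omega
      rw [he]; exact reach_rfl _ _
    | @insert i S hiS ih =>
      intro hSn M hM
      have hin : i < n := hSn i (Finset.mem_insert_self i S)
      have hen : Enabled N M (t i) :=
        ⟨htr i hin, fun p hp => hM i (Finset.mem_insert_self i S) p hp⟩
      refine reach_head hen ?_
      have hM' : ∀ j ∈ S, ∀ p ∈ preT N (t j), 0 < fire N (t i) M p := by
        intro j hj p hp
        have hji : p ∉ preT N (t i) := by
          intro hc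
          have hij : j ≠ i := fun he => hiS (he ▸ hj)
          have hm : p ∈ preT N (t j) ∩ preT N (t i) := ⟨hp, hc⟩
          rw [hpreD j (hSn j (Finset.mem_insert_of_mem hj)) i hin hij] at hm
          exact hm
        have h1 := hM j (Finset.mem_insert_of_mem hj) p hp
        rw [fire_apply, if_neg hji]
        by_cases hd : p ∈ postT N (t i) <;> simp only [hd, if_true, if_false] <;> omega
      have hres := ih (fun j hj => hSn j (Finset.mem_insert_of_mem hj)) _ hM'
      have he : (fun p => fire N (t i) M p - parA N t S p + parB N t S p) =
          (fun p => M p - parA N t (insert i S) p + parB N t (insert i S) p) := by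
        funext p
        rw [fire_apply, parA_insert N t hiS, parB_insert N t hiS]
        by_cases hc : p ∈ preT N (t i)
        · have hAS : parA N t S p = 0 := by
            refine parA_zero N t ?_
            intro j hj hcc
            have hij : j ≠ i := fun he => hiS (he ▸ hj)
            have hm : p ∈ preT N (t j) ∩ preT N (t i) := ⟨hcc, hc⟩
            rw [hpreD j (hSn j (Finset.mem_insert_of_mem hj)) i hin hij] at hm
            exact hm
          have hd : p ∉ postT N (t i) := gPrePost i hin p hc i hin
          have hBS : parB N t S p = 0 := parB_zero N t (fun j hj hcc =>
            gPrePost i hin p hc j (hSn j (Finset.mem_insert_of_mem hj)) hcc)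
          have hMp := hM i (Finset.mem_insert_self i S) p hc
          rw [hAS, hBS]
          simp only [hc, hd, if_true, if_false]
          omega
        · by_cases hd : p ∈ postT N (t i)
          · have hAS : parA N t S p = 0 := parA_zero N t (fun j hj hcc =>
              gPrePost j (hSn j (Finset.mem_insert_of_mem hj)) p hcc i hin hd)
            rw [hAS]
            simp only [hc, hd, if_true, if_false]
            omega
          · simp only [hc, hd, if_true, if_false]
            omega
      rw [← he]
      exact hres
  -- the effect of t' in N'
  have hfire'eq : ∀ M : P → ℕ, fire N' t' M =
      (fun p => M p - parA N t (Finset.range n) p + parB N t (Finset.range n) p) := by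
    intro M
    funext p
    rw [fire_apply, f_pre', f_post']
    have hrn : ∀ i ∈ Finset.range n, i < n := fun i hi => Finset.mem_range.1 hi
    by_cases hc : ∃ i, i < n ∧ p ∈ preT N (t i)
    · obtain ⟨j, hj, hp⟩ := hc
      have hA := pAmem (Finset.range n) hrn j hj p hp
      rw [if_pos (Finset.mem_range.2 hj)] at hA
      have hB : parB N t (Finset.range n) p = 0 := parB_zero N t (fun i hi hcc =>
        gPrePost j hj p hp i (hrn i hi) hcc)
      have hd : p ∉ {p | ∃ i < n, p ∈ postT N (t i)} := by
        rintro ⟨i, hi, hcc⟩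
        exact gPrePost j hj p hp i hi hcc
      rw [if_pos (show p ∈ {p | ∃ i < n, p ∈ preT N (t i)} from ⟨j, hj, hp⟩),
        if_neg hd, hA, hB]
    · have hA : parA N t (Finset.range n) p = 0 := parA_zero N t (fun i hi hcc =>
        hc ⟨i, hrn i hi, hcc⟩)
      rw [if_neg (show p ∉ {p | ∃ i < n, p ∈ preT N (t i)} from
        fun ⟨i, hi, hcc⟩ => hc ⟨i, hi, hcc⟩), hA]
      by_cases hd : ∃ i, i < n ∧ p ∈ postT N (t i)
      · obtain ⟨j, hj, hp⟩ := hd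
        have hB := pBmem (Finset.range n) hrn j hj p hp
        rw [if_pos (Finset.mem_range.2 hj)] at hB
        rw [if_pos (show p ∈ {p | ∃ i < n, p ∈ postT N (t i)} from ⟨j, hj, hp⟩), hB]
      · have hB : parB N t (Finset.range n) p = 0 := parB_zero N t (fun i hi hcc =>
          hd ⟨i, hrn i hi, hcc⟩)
        rw [if_neg (show p ∉ {p | ∃ i < n, p ∈ postT N (t i)} from
          fun ⟨i, hi, hcc⟩ => hd ⟨i, hi, hcc⟩), hB]
  have hbs : ∀ {M M'' : P → ℕ}, Reach N' M M'' → Reach N M M'' := by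
    refine hR.bsim ?_
    intro M hen
    rw [hfire'eq M]
    refine pfire (Finset.range n) (fun i hi => Finset.mem_range.1 hi) M ?_
    intro i hi p hp
    exact hen.2 p (by rw [f_pre']; exact ⟨i, Finset.mem_range.1 hi, hp⟩)
  -- a full member is itself N'-reachable
  have hfullmem : ∀ (S : Finset ℕ) (M : P → ℕ), (∀ i ∈ S, i < n) →
      Reach N' (mark {pi}) (parBk N t S M) →
      (∀ i < n, ∀ q ∈ postT N (t i), M q = if i ∈ S then 1 else 0) →
      (∀ i, i < n → i ∈ S) → Reach N' (mark {pi}) M := by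
    intro S M hS hWr hval hfull
    have hen : Enabled N' (parBk N t S M) t' := by
      refine ⟨hR.t'_mem, ?_⟩
      intro p hp
      rw [f_pre'] at hp
      obtain ⟨j, hj, hpj⟩ := hp
      rw [parBk_apply, pAmem S hS j hj p hpj, if_pos (hfull j hj),
        parB_zero N t (fun i hi hcc => gPrePost j hj p hpj i (hS i hi) hcc)]
      omega
    have he : fire N' t' (parBk N t S M) = M := by
      rw [hfire'eq]
      funext p
      beta_reduce
      have hrn : ∀ i ∈ Finset.range n, i < n := fun i hi => Finset.mem_range.1 hi
      by_cases hc : ∃ j, j < n ∧ p ∈ preT N (t j)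
      · obtain ⟨j, hj, hp⟩ := hc
        have hB0 : parB N t S p = 0 := parB_zero N t (fun i hi hcc =>
          gPrePost j hj p hp i (hS i hi) hcc)
        have hBr : parB N t (Finset.range n) p = 0 := parB_zero N t (fun i hi hcc =>
          gPrePost j hj p hp i (hrn i hi) hcc)
        have hAr := pAmem (Finset.range n) hrn j hj p hp
        rw [if_pos (Finset.mem_range.2 hj)] at hAr
        rw [parBk_apply, pAmem S hS j hj p hp, if_pos (hfull j hj), hB0, hAr, hBr]
        omega
      · have hA0 : parA N t S p = 0 := parA_zero N t (fun i hi hcc =>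
          hc ⟨i, hS i hi, hcc⟩)
        have hAr : parA N t (Finset.range n) p = 0 := parA_zero N t (fun i hi hcc =>
          hc ⟨i, hrn i hi, hcc⟩)
        by_cases hd : ∃ j, j < n ∧ p ∈ postT N (t j)
        · obtain ⟨j, hj, hp⟩ := hd
          have hMq := hval j hj p hp
          rw [if_pos (hfull j hj)] at hMq
          have hBr := pBmem (Finset.range n) hrn j hj p hp
          rw [if_pos (Finset.mem_range.2 hj)] at hBr
          have hB0 := pBmem S hS j hj p hp
          rw [if_pos (hfull j hj)] at hB0
          rw [parBk_apply, hA0, hAr, hB0, hBr, hMq]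
        · have hB0 : parB N t S p = 0 := parB_zero N t (fun i hi hcc =>
            hd ⟨i, hS i hi, hcc⟩)
          have hBr : parB N t (Finset.range n) p = 0 := parB_zero N t (fun i hi hcc =>
            hd ⟨i, hrn i hi, hcc⟩)
          rw [parBk_apply, hA0, hAr, hB0, hBr]
          omega
    rw [← he]
    exact reach_trans hWr (reach_single hen)
  -- every RS-marking is reachable in N
  have hRtoR : ∀ M, parRS N N' pi n t M → Reach N (mark {pi}) M := by
    rintro M ⟨S, hS, hWr, hval⟩
    have h1 : Reach N (mark {pi}) (parBk N t S M) := hbs hWr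
    have htok : ∀ i ∈ S, ∀ p ∈ preT N (t i), 0 < parBk N t S M p := by
      intro i hi p hp
      rw [parBk_apply, pAmem S hS i (hS i hi) p hp, if_pos hi,
        parB_zero N t (fun j hj hcc => gPrePost i (hS i hi) p hp j (hS j hj) hcc)]
      omega
    have h2 := pfire S hS _ htok
    have he : (fun p => parBk N t S M p - parA N t S p + parB N t S p) = M := by
      funext p
      rw [parBk_apply]
      by_cases hc : ∃ j, j < n ∧ p ∈ preT N (t j)
      · obtain ⟨j, hj, hp⟩ := hc
        rw [pAmem S hS j hj p hp,
          parB_zero N t (fun i hi hcc => gPrePost j hj p hp i (hS i hi) hcc)]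
        by_cases hjS : j ∈ S <;> simp only [hjS, if_true, if_false] <;> omega
      · have hA : parA N t S p = 0 := parA_zero N t (fun i hi hcc => hc ⟨i, hS i hi, hcc⟩)
        rw [hA]
        by_cases hd : ∃ j, j < n ∧ p ∈ postT N (t j)
        · obtain ⟨j, hj, hp⟩ := hd
          have hMq := hval j hj p hp
          rw [pBmem S hS j hj p hp, hMq]
          by_cases hjS : j ∈ S <;> simp only [hjS, if_true, if_false] <;> omega
        · rw [parB_zero N t (fun i hi hcc => hd ⟨i, hS i hi, hcc⟩)]
          omega
    rw [← he]
    exact reach_trans h1 h2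
  -- closure of RS under firing in N
  have hclose : ∀ M u, parRS N N' pi n t M → Enabled N M u →
      parRS N N' pi n t (fire N u M) := by
    intro M u hRSM hen
    obtain ⟨S, hS, hWr, hval⟩ := hRSM
    by_cases hKu : ∃ i < n, u = t i
    · obtain ⟨i, hi, rfl⟩ := hKu
      by_cases hiS : i ∈ S
      · exfalso
        obtain ⟨p, hp⟩ := hPrene i hi
        have h1 := hen.2 p hp
        have hsafe := hS'.1 _ hWr p
        rw [parBk_apply, pAmem S hS i hi p hp, if_pos hiS,
          parB_zero N t (fun j hjS hc => gPrePost i hi p hp j (hS j hjS) hc)] at hsafe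
        omega
      · refine ⟨insert i S, ?_, ?_, ?_⟩
        · intro j hj
          rcases Finset.mem_insert.1 hj with rfl | hj'
          · exact hi
          · exact hS j hj'
        · have he : parBk N t (insert i S) (fire N (t i) M) = parBk N t S M := by
            funext p
            rw [parBk_apply, parBk_apply, fire_apply, parA_insert N t hiS,
              parB_insert N t hiS]
            by_cases h1 : p ∈ preT N (t i)
            · have hd : p ∉ postT N (t i) := gPrePost i hi p h1 i hi
              have hB : parB N t S p = 0 := parB_zero N t (fun j hjS hc =>
                gPrePost i hi p h1 j (hS j hjS) hc)
              have hM1 := hen.2 p h1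
              rw [hB]
              simp only [h1, hd, if_true, if_false]
              omega
            · by_cases hd : p ∈ postT N (t i)
              · have hA : parA N t S p = 0 := parA_zero N t (fun j hjS hc =>
                  gPrePost j (hS j hjS) p hc i hi hd)
                have hMp := hval i hi p hd
                rw [if_neg hiS] at hMp
                have hB := pBmem S hS i hi p hd
                rw [if_neg hiS] at hB
                rw [hA, hB]
                simp only [h1, hd, if_true, if_false]
                omega
              · simp only [h1, hd, if_true, if_false]
                omega
          rw [he]
          exact hWr
        · intro j hj q hq
          by_cases hji : j = i
          · subst hji
            have hc1 : q ∉ preT N (t j) := fun hc => gPrePost j hj q hc j hj hq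
            have hMq := hval j hj q hq
            rw [if_neg hiS] at hMq
            rw [fire_apply, if_neg hc1, if_pos hq, hMq,
              if_pos (Finset.mem_insert_self j S)]
          · have hc1 : q ∉ preT N (t i) := fun hc => gPrePost i hi q hc j hj hq
            have hc2 : q ∉ postT N (t i) := by
              intro hc
              have hm : q ∈ postT N (t j) ∩ postT N (t i) := ⟨hq, hc⟩
              rw [hpostD j hj i hi hji] at hm
              exact hm
            rw [fire_apply, if_neg hc1, if_neg hc2, hval j hj q hq]
            by_cases hjS : j ∈ S
            · rw [if_pos hjS, if_pos (Finset.mem_insert_of_mem hjS)]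
            · rw [if_neg hjS,
                if_neg (fun hc => hjS ((Finset.mem_insert.1 hc).resolve_left hji))]
    · -- old transition
      have hwtr := hen.1
      have hne' := hR.old_ne_t' hwtr
      by_cases hex : ∃ q0, (∃ i, i < n ∧ q0 ∈ postT N (t i)) ∧ q0 ∈ preT N u
      · -- join-type transition: S must be full
        obtain ⟨q0, ⟨i0, hi0, hq0i⟩, hq0w⟩ := hex
        have hsub : ∀ j, j < n → ∀ q ∈ postT N (t j), q ∈ preT N u :=
          fun j hj q hq => gJoin u q0 hq0w i0 hi0 hq0i j hj q hq
        have hfull : ∀ j, j < n → j ∈ S := by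
          intro j hj
          obtain ⟨q, hq⟩ := hPostne j hj
          have h1 := hen.2 q (hsub j hj q hq)
          have hMq := hval j hj q hq
          by_cases hjS : j ∈ S
          · exact hjS
          · rw [if_neg hjS] at hMq; omega
        have hMreach' : Reach N' (mark {pi}) M := hfullmem S M hS hWr hval hfull
        have henN' : Enabled N' M u :=
          ⟨hR.old_mem hwtr hKu, fun p hp =>
            hen.2 p (by rw [hR.preT_old hKu hne'] at hp; exact hp)⟩
        refine ⟨∅, by simp, ?_, ?_⟩
        · rw [parBk_empty, ← hR.fire_old hKu hne' M]
          exact reach_trans hMreach' (reach_single henN')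
        · intro i hi q hq
          have h2 : q ∈ preT N u := hsub i hi q hq
          have h3 : q ∉ postT N u := fun hc => gOldPost u hKu q hc i hi hq
          have hMq := hval i hi q hq
          rw [if_pos (hfull i hi)] at hMq
          rw [fire_apply, if_pos h2, if_neg h3, hMq, if_neg (Finset.notMem_empty i)]
      · -- the firing can be mirrored at the rolled-back marking
        push_neg at hex
        have htype1 : ∀ p ∈ preT N u, ∀ i, i < n → p ∉ postT N (t i) :=
          fun p hp i hi hc => hex p ⟨i, hi, hc⟩ hp
        have henX : Enabled N' (parBk N t S M) u := by
          refine ⟨hR.old_mem hwtr hKu, ?_⟩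
          intro p hp
          rw [hR.preT_old hKu hne'] at hp
          have h1 := hen.2 p hp
          rw [parBk_apply,
            parA_zero N t (fun j hjS hc => gOldPre u hKu p hp j (hS j hjS) hc),
            parB_zero N t (fun j hjS hc => htype1 p hp j (hS j hjS) hc)]
          omega
        refine ⟨S, hS, ?_, ?_⟩
        · have he : parBk N t S (fire N u M) = fire N' u (parBk N t S M) := by
            funext p
            rw [parBk_apply, fire_apply, fire_apply, hR.preT_old hKu hne',
              hR.postT_old hKu hne', parBk_apply]
            by_cases h1 : p ∈ preT N u
            · have hA := parA_zero N t (fun j hjS hc =>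
                gOldPre u hKu p h1 j (hS j hjS) hc)
              have hB := parB_zero N t (fun j hjS hc =>
                htype1 p h1 j (hS j hjS) hc)
              have hMp := hen.2 p h1
              rw [hA, hB]
              by_cases h2 : p ∈ postT N u <;>
                simp only [h1, h2, if_true, if_false] <;> omega
            · by_cases h2 : p ∈ postT N u
              · have hB := parB_zero N t (fun j hjS hc =>
                  gOldPost u hKu p h2 j (hS j hjS) hc)
                rw [hB]
                simp only [h1, h2, if_true, if_false]
                omega
              · simp only [h1, h2, if_true, if_false]
                omega
          rw [he]
          exact reach_trans hWr (reach_single henX)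
        · intro i hi q hq
          have h2 : q ∉ preT N u := fun hc => htype1 q hc i hi hq
          have h3 : q ∉ postT N u := fun hc => gOldPost u hKu q hc i hi hq
          rw [fire_apply, if_neg h2, if_neg h3, hval i hi q hq]
          omega
  -- every N-reachable marking satisfies RS
  have hRSall : ∀ M, Reach N (mark {pi}) M → parRS N N' pi n t M := by
    have hinit : parRS N N' pi n t (mark {pi}) := by
      refine ⟨∅, by simp, ?_, ?_⟩
      · rw [parBk_empty]; exact reach_rfl _ _
      · intro i hi q hq
        rw [mark_apply, if_neg ?_, if_neg (Finset.notMem_empty i)]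
        intro hc
        rw [Set.mem_singleton_iff] at hc
        subst hc
        exact hI.2.2.1 (t i) hq
    have key : ∀ (σ : List T) (M M'' : P → ℕ), FSeq N M σ M'' →
        parRS N N' pi n t M → parRS N N' pi n t M'' := by
      intro σ
      induction σ with
      | nil => intro M M'' h hM; cases h; exact hM
      | cons u σ ih =>
        intro M M'' h hM
        cases h with
        | cons _ _ _ _ hen hs => exact ih _ _ hs (hclose M u hM hen)
    rintro M ⟨σ, h⟩
    exact key σ _ _ h hinit
  -- safety of N
  have hsafeN : ∀ M, Reach N (mark {pi}) M → ∀ p, M p ≤ 1 := by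
    intro M hM p
    obtain ⟨S, hS, hWr, hval⟩ := hRSall M hM
    by_cases hd : ∃ i, i < n ∧ p ∈ postT N (t i)
    · obtain ⟨i, hi, hpi⟩ := hd
      rw [hval i hi p hpi]
      by_cases hiS : i ∈ S
      · rw [if_pos hiS]
      · rw [if_neg hiS]; omega
    · have hsafe := hS'.1 _ hWr p
      rw [parBk_apply, parB_zero N t (fun j hjS hc => hd ⟨j, hS j hjS, hc⟩)] at hsafe
      omega
  -- strong safety of N
  have hSSN : SSafe N pi := by
    intro u hu M hM hq p hp
    obtain ⟨S, hS, hWr, hval⟩ := hRSall M hM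
    by_cases hKu : ∃ i < n, u = t i
    · obtain ⟨i, hi, rfl⟩ := hKu
      have hiS : i ∈ S := by
        obtain ⟨q, hqQ⟩ := hPostne i hi
        have h1 := hq q hqQ
        have hMq := hval i hi q hqQ
        by_cases hiS : i ∈ S
        · exact hiS
        · rw [if_neg hiS] at hMq; omega
      by_contra hc
      have hsafe := hS'.1 _ hWr p
      rw [parBk_apply, pAmem S hS i hi p hp, if_pos hiS,
        parB_zero N t (fun j hjS hcc => gPrePost i hi p hp j (hS j hjS) hcc)] at hsafe
      omega
    · have hne' := hR.old_ne_t' hu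
      by_cases hpin : ∃ i, i < n ∧ p ∈ postT N (t i)
      · obtain ⟨i, hi, hpi⟩ := hpin
        by_contra hcM
        have hiS : i ∈ S := by
          have hMp := hval i hi p hpi
          by_cases hiS : i ∈ S
          · exact hiS
          · rw [if_neg hiS] at hMp; omega
        have hBzero : ∀ q ∈ postT N u, parB N t S q = 0 :=
          fun q hq' => parB_zero N t (fun j hjS hc =>
            gOldPost u hKu q hq' j (hS j hjS) hc)
        have htokBk : ∀ q ∈ postT N' u, 0 < parBk N t S M q := by
          intro q hq'
          rw [hR.postT_old hKu hne'] at hq'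
          have h1 := hq q hq'
          rw [parBk_apply, hBzero q hq']
          omega
        have hr := hUF' u (hR.old_mem hu hKu) _ hWr htokBk
        obtain ⟨p1, hp1⟩ := hPrene i hi
        have hp1nu : p1 ∉ postT N u := by
          intro hc1
          have hsafe := hS'.1 _ hWr p1
          rw [parBk_apply, pAmem S hS i hi p1 hp1, if_pos hiS,
            parB_zero N t (fun j hjS hcc =>
              gPrePost i hi p1 hp1 j (hS j hjS) hcc)] at hsafe
          have h2 := hq p1 hc1
          omega
        have htokt' : ∀ q ∈ postT N' t', 0 < unfire N' u (parBk N t S M) q := by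
          intro q hq'
          rw [f_post'] at hq'
          obtain ⟨j, hj, hqj⟩ := hq'
          have h2 : q ∈ preT N u := gJoin u p hp i hi hpi j hj q hqj
          have h3 : q ∉ postT N u := fun hc => gOldPost u hKu q hc j hj hqj
          rw [unfire_apply, hR.preT_old hKu hne', hR.postT_old hKu hne',
            if_neg h3, if_pos h2]
          omega
        have hzero := hSS' t' hR.t'_mem _ hr htokt' p1 (by rw [f_pre']; exact ⟨i, hi, hp1⟩)
        rw [unfire_apply, hR.preT_old hKu hne', hR.postT_old hKu hne', if_neg hp1nu,
          parBk_apply, pAmem S hS i hi p1 hp1, if_pos hiS,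
          parB_zero N t (fun j hjS hcc =>
            gPrePost i hi p1 hp1 j (hS j hjS) hcc)] at hzero
        by_cases hx : p1 ∈ preT N u
        · rw [if_pos hx] at hzero; omega
        · rw [if_neg hx] at hzero; omega
      · have htokBk : ∀ q ∈ postT N' u, 0 < parBk N t S M q := by
          intro q hq'
          rw [hR.postT_old hKu hne'] at hq'
          have h1 := hq q hq'
          rw [parBk_apply, parB_zero N t (fun j hjS hc =>
            gOldPost u hKu q hq' j (hS j hjS) hc)]
          omega
        have hzero := hSS' u (hR.old_mem hu hKu) _ hWr htokBk p
          (by rw [hR.preT_old hKu hne']; exact hp)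
        rw [parBk_apply,
          parA_zero N t (fun j hjS hc => gOldPre u hKu p hp j (hS j hjS) hc),
          parB_zero N t (fun j hjS hc => hpin ⟨j, hS j hjS, hc⟩)] at hzero
        omega
  -- un-fireability of N
  have hUFN : UnF N pi := by
    intro u hu M hM hq
    obtain ⟨S, hS, hWr, hval⟩ := hRSall M hM
    by_cases hKu : ∃ i < n, u = t i
    · obtain ⟨i, hi, rfl⟩ := hKu
      have hiS : i ∈ S := by
        obtain ⟨q, hqQ⟩ := hPostne i hi
        have h1 := hq q hqQ
        have hMq := hval i hi q hqQ
        by_cases hiS : i ∈ S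
        · exact hiS
        · rw [if_neg hiS] at hMq; omega
      refine hRtoR _ ⟨S.erase i, fun j hj => hS j (Finset.mem_erase.1 hj).2, ?_, ?_⟩
      · have he : parBk N t (S.erase i) (unfire N (t i) M) = parBk N t S M := by
          funext p
          rw [parBk_apply, parBk_apply, unfire_apply,
            parA_erase N t hiS p, parB_erase N t hiS p]
          by_cases h1 : p ∈ preT N (t i)
          · have hd : p ∉ postT N (t i) := gPrePost i hi p h1 i hi
            have hB : parB N t (S.erase i) p = 0 := parB_zero N t (fun j hjS hc =>
              gPrePost i hi p h1 j (hS j (Finset.mem_erase.1 hjS).2) hc)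
            rw [hB]
            simp only [h1, hd, if_true, if_false]
            omega
          · by_cases hd : p ∈ postT N (t i)
            · have hA : parA N t (S.erase i) p = 0 := parA_zero N t (fun j hjS hc =>
                gPrePost j (hS j (Finset.mem_erase.1 hjS).2) p hc i hi hd)
              have hMp := hval i hi p hd
              rw [if_pos hiS] at hMp
              rw [hA]
              simp only [h1, hd, if_true, if_false]
              omega
            · simp only [h1, hd, if_true, if_false]
              omega
        rw [he]
        exact hWr
      · intro j hj q hq'
        by_cases hji : j = i
        · subst hji
          have h2 : q ∉ preT N (t j) := fun hc => gPrePost j hj q hc j hj hq'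
          have hMq := hval j hj q hq'
          rw [if_pos hiS] at hMq
          rw [unfire_apply, if_pos hq', if_neg h2, hMq,
            if_neg (fun hc => (Finset.mem_erase.1 hc).1 rfl)]
        · have h2 : q ∉ postT N (t i) := by
            intro hc
            have hm : q ∈ postT N (t j) ∩ postT N (t i) := ⟨hq', hc⟩
            rw [hpostD j hj i hi hji] at hm
            exact hm
          have h3 : q ∉ preT N (t i) := fun hc => gPrePost i hi q hc j hj hq'
          rw [unfire_apply, if_neg h2, if_neg h3, hval j hj q hq']
          by_cases hjS : j ∈ S
          · rw [if_pos hjS, if_pos (Finset.mem_erase.2 ⟨hji, hjS⟩)]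
          · rw [if_neg hjS, if_neg (fun hc => hjS (Finset.mem_erase.1 hc).2)]
    · have hne' := hR.old_ne_t' hu
      by_cases hex : ∃ q0, q0 ∈ preT N u ∧ ∃ i, i < n ∧ q0 ∈ postT N (t i)
      · obtain ⟨q0, hq0w, i0, hi0, hq0i⟩ := hex
        have hSempty : S = ∅ := by
          by_contra hne
          obtain ⟨j, hjS⟩ := Finset.nonempty_of_ne_empty hne
          have hjn := hS j hjS
          obtain ⟨q, hqj⟩ := hPostne j hjn
          have hqw : q ∈ preT N u := gJoin u q0 hq0w i0 hi0 hq0i j hjn q hqj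
          have hzero := hSSN u hu M hM hq q hqw
          have hMq := hval j hjn q hqj
          rw [if_pos hjS] at hMq
          omega
        subst hSempty
        rw [parBk_empty] at hWr
        have htok : ∀ q ∈ postT N' u, 0 < M q := by
          intro q hq'
          rw [hR.postT_old hKu hne'] at hq'
          exact hq q hq'
        have hr := hUF' u (hR.old_mem hu hKu) M hWr htok
        have he : unfire N u M = unfire N' u M := by
          unfold unfire
          rw [hR.preT_old hKu hne', hR.postT_old hKu hne']
        rw [he]
        exact hbs hr
      · push_neg at hex
        have htype1 : ∀ p ∈ preT N u, ∀ i, i < n → p ∉ postT N (t i) :=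
          fun p hp i hi hc => hex p hp i hi hc
        have hBzero : ∀ q ∈ postT N u, parB N t S q = 0 :=
          fun q hq' => parB_zero N t (fun j hjS hc =>
            gOldPost u hKu q hq' j (hS j hjS) hc)
        have htokBk : ∀ q ∈ postT N' u, 0 < parBk N t S M q := by
          intro q hq'
          rw [hR.postT_old hKu hne'] at hq'
          have h1 := hq q hq'
          rw [parBk_apply, hBzero q hq']
          omega
        have hr := hUF' u (hR.old_mem hu hKu) _ hWr htokBk
        refine hRtoR _ ⟨S, hS, ?_, ?_⟩
        · have he : parBk N t S (unfire N u M) = unfire N' u (parBk N t S M) := by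
            funext p
            rw [parBk_apply, unfire_apply, unfire_apply, parBk_apply,
              hR.preT_old hKu hne', hR.postT_old hKu hne']
            by_cases h1 : p ∈ postT N u
            · have hMp := hq p h1
              have hB := hBzero p h1
              rw [hB]
              by_cases h2 : p ∈ preT N u
              · have hA := parA_zero N t (fun j hjS hc =>
                  gOldPre u hKu p h2 j (hS j hjS) hc)
                rw [hA]
                simp only [h1, h2, if_true, if_false]
                omega
              · simp only [h1, h2, if_true, if_false]
                omega
            · by_cases h2 : p ∈ preT N u
              · have hA := parA_zero N t (fun j hjS hc =>
                  gOldPre u hKu p h2 j (hS j hjS) hc)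
                have hB := parB_zero N t (fun j hjS hc =>
                  htype1 p h2 j (hS j hjS) hc)
                rw [hA, hB]
                simp only [h1, h2, if_true, if_false]
                omega
              · simp only [h1, h2, if_true, if_false]
                omega
          rw [he]
          exact hr
        · intro i hi q hq'
          have h2 : q ∉ preT N u := fun hc => htype1 q hc i hi hq'
          have h3 : q ∉ postT N u := fun hc => gOldPost u hKu q hc i hi hq'
          rw [unfire_apply, if_neg h3, if_neg h2, hval i hi q hq']
          omega
  -- option to complete: simulation of an N'-run towards [po]
  have hOTC : ∀ (σ : List T) (X Xf : P → ℕ), FSeq N' X σ Xf →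
      ∀ (M : P → ℕ) (S : Finset ℕ), (∀ i ∈ S, i < n) →
      Reach N' (mark {pi}) X →
      (∀ i < n, ∀ q ∈ postT N (t i), M q = if i ∈ S then 1 else 0) →
      (X = parBk N t S M ∨ ((∀ i, i < n → i ∈ S) ∧ X = M)) →
      Xf = mark {po} → Reach N M (mark {po}) := by
    intro σ
    induction σ with
    | nil =>
      intro X Xf h M S hS hXr hval hrel hfin
      cases h
      rcases hrel with rfl | ⟨hfull, rfl⟩
      · have hSempty : S = ∅ := by
          by_contra hne
          obtain ⟨i, hiS⟩ := Finset.nonempty_of_ne_empty hne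
          obtain ⟨p, hp⟩ := hPrene i (hS i hiS)
          have h1 := congrFun hfin p
          rw [parBk_apply, pAmem S hS i (hS i hiS) p hp, if_pos hiS,
            parB_zero N t (fun j hjS hcc =>
              gPrePost i (hS i hiS) p hp j (hS j hjS) hcc), mark_apply] at h1
          by_cases hppo : p = po
          · subst hppo
            exact hI.2.2.2.1 (t i) hp
          · rw [if_neg (fun hc => hppo (Set.mem_singleton_iff.1 hc))] at h1
            omega
        subst hSempty
        rw [parBk_empty] at hfin
        rw [hfin]
        exact reach_rfl _ _
      · exfalso
        obtain ⟨q0, hq0⟩ := hPostne 0 (by omega)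
        obtain ⟨q1, hq1⟩ := hPostne 1 (by omega)
        have h0 := hval 0 (by omega) q0 hq0
        rw [if_pos (hfull 0 (by omega)), hfin, mark_apply] at h0
        have hq0po : q0 = po := by
          by_cases hc : q0 ∈ ({po} : Set P)
          · exact Set.mem_singleton_iff.1 hc
          · rw [if_neg hc] at h0; omega
        have h1 := hval 1 (by omega) q1 hq1
        rw [if_pos (hfull 1 (by omega)), hfin, mark_apply] at h1
        have hq1po : q1 = po := by
          by_cases hc : q1 ∈ ({po} : Set P)
          · exact Set.mem_singleton_iff.1 hc
          · rw [if_neg hc] at h1; omega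
        have hm : po ∈ postT N (t 0) ∩ postT N (t 1) :=
          ⟨hq0po ▸ hq0, hq1po ▸ hq1⟩
        rw [hpostD 0 (by omega) 1 (by omega) (by omega)] at hm
        exact hm
    | cons w σ ih =>
      intro X Xf h M S hS hXr hval hrel hfin
      cases h with
      | cons _ _ _ _ hen hs =>
        have hXr' : Reach N' (mark {pi}) (fire N' w X) :=
          reach_trans hXr (reach_single hen)
        by_cases hw : w = t'
        · rw [hw] at hen hs hXr'
          rcases hrel with rfl | ⟨hfull, hXM⟩
          · -- fire the remaining transitions in N
            have hrnS : ∀ i ∈ Finset.range n \ S, i < n :=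
              fun i hi => Finset.mem_range.1 (Finset.mem_sdiff.1 hi).1
            have htokc : ∀ j ∈ Finset.range n \ S, ∀ p ∈ preT N (t j), 0 < M p := by
              intro j hj p hp
              have hjn : j < n := hrnS j hj
              have hjS : j ∉ S := (Finset.mem_sdiff.1 hj).2
              have h1 := hen.2 p (by rw [f_pre']; exact ⟨j, hjn, hp⟩)
              rw [parBk_apply, pAmem S hS j hjn p hp, if_neg hjS,
                parB_zero N t (fun i hiS hcc =>
                  gPrePost j hjn p hp i (hS i hiS) hcc)] at h1
              omega
            have hreachrem := pfire (Finset.range n \ S) hrnS M htokc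
            refine reach_trans hreachrem
              (ih _ _ hs _ (Finset.range n) (fun i hi => Finset.mem_range.1 hi)
                hXr' ?_ (Or.inr ⟨fun i hi => Finset.mem_range.2 hi, ?_⟩) hfin)
            · intro i hi q hq
              beta_reduce
              have hAq : parA N t (Finset.range n \ S) q = 0 :=
                parA_zero N t (fun j hjS hc =>
                  gPrePost j (hrnS j hjS) q hc i hi hq)
              have hBq := pBmem (Finset.range n \ S) hrnS i hi q hq
              have hMq := hval i hi q hq
              rw [hAq, hBq, hMq, if_pos (Finset.mem_range.2 hi)]
              by_cases hiS : i ∈ S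
              · rw [if_pos hiS,
                  if_neg (fun hc => (Finset.mem_sdiff.1 hc).2 hiS)]
              · rw [if_neg hiS,
                  if_pos (Finset.mem_sdiff.2 ⟨Finset.mem_range.2 hi, hiS⟩)]
            · -- fire N' t' (parBk S M) = M - A_(range\S) + B_(range\S)
              rw [hfire'eq]
              funext p
              beta_reduce
              have hrn : ∀ i ∈ Finset.range n, i < n := fun i hi => Finset.mem_range.1 hi
              by_cases hc : ∃ j, j < n ∧ p ∈ preT N (t j)
              · obtain ⟨j, hj, hp⟩ := hc
                have hB0 : parB N t S p = 0 := parB_zero N t (fun i hiS hcc =>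
                  gPrePost j hj p hp i (hS i hiS) hcc)
                have hBr : parB N t (Finset.range n) p = 0 :=
                  parB_zero N t (fun i hiS hcc =>
                    gPrePost j hj p hp i (hrn i hiS) hcc)
                have hBc : parB N t (Finset.range n \ S) p = 0 :=
                  parB_zero N t (fun i hiS hcc =>
                    gPrePost j hj p hp i (hrnS i hiS) hcc)
                have hAr := pAmem (Finset.range n) hrn j hj p hp
                rw [if_pos (Finset.mem_range.2 hj)] at hAr
                have hAc := pAmem (Finset.range n \ S) hrnS j hj p hp
                rw [parBk_apply, pAmem S hS j hj p hp, hB0, hAr, hBr, hBc, hAc]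
                by_cases hjS : j ∈ S
                · rw [if_pos hjS, if_neg (fun hcc => (Finset.mem_sdiff.1 hcc).2 hjS)]
                  omega
                · rw [if_neg hjS,
                    if_pos (Finset.mem_sdiff.2 ⟨Finset.mem_range.2 hj, hjS⟩)]
                  have h1 := hen.2 p (by rw [f_pre']; exact ⟨j, hj, hp⟩)
                  rw [parBk_apply, pAmem S hS j hj p hp, if_neg hjS, hB0] at h1
                  omega
              · have hA0 : parA N t S p = 0 :=
                  parA_zero N t (fun i hiS hcc => hc ⟨i, hS i hiS, hcc⟩)
                have hAr : parA N t (Finset.range n) p = 0 :=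
                  parA_zero N t (fun i hiS hcc => hc ⟨i, hrn i hiS, hcc⟩)
                have hAc : parA N t (Finset.range n \ S) p = 0 :=
                  parA_zero N t (fun i hiS hcc => hc ⟨i, hrnS i hiS, hcc⟩)
                by_cases hd : ∃ j, j < n ∧ p ∈ postT N (t j)
                · obtain ⟨j, hj, hp⟩ := hd
                  have hMq := hval j hj p hp
                  have hB0 := pBmem S hS j hj p hp
                  have hBr := pBmem (Finset.range n) hrn j hj p hp
                  rw [if_pos (Finset.mem_range.2 hj)] at hBr
                  have hBc := pBmem (Finset.range n \ S) hrnS j hj p hp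
                  rw [parBk_apply, hA0, hAr, hAc, hB0, hBr, hBc, hMq]
                  by_cases hjS : j ∈ S
                  · rw [if_pos hjS,
                      if_neg (fun hcc => (Finset.mem_sdiff.1 hcc).2 hjS)]
                  · rw [if_neg hjS,
                      if_pos (Finset.mem_sdiff.2 ⟨Finset.mem_range.2 hj, hjS⟩)]
                · have hB0 : parB N t S p = 0 :=
                    parB_zero N t (fun i hiS hcc => hd ⟨i, hS i hiS, hcc⟩)
                  have hBr : parB N t (Finset.range n) p = 0 :=
                    parB_zero N t (fun i hiS hcc => hd ⟨i, hrn i hiS, hcc⟩)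
                  have hBc : parB N t (Finset.range n \ S) p = 0 :=
                    parB_zero N t (fun i hiS hcc => hd ⟨i, hrnS i hiS, hcc⟩)
                  rw [parBk_apply, hA0, hAr, hAc, hB0, hBr, hBc]
                  omega
          · -- X = M with S full: contradiction with safety
            exfalso
            rw [hXM] at hen hXr'
            obtain ⟨q0, hq0⟩ := hPostne 0 (by omega)
            have hsafe := hS'.1 _ hXr' q0
            have h1 : q0 ∉ preT N' t' := by
              rw [f_pre']
              rintro ⟨j, hj, hcj⟩
              exact gPrePost j hj q0 hcj 0 (by omega) hq0
            have h2 : q0 ∈ postT N' t' := by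
              rw [f_post']
              exact ⟨0, by omega, hq0⟩
            have hMq := hval 0 (by omega) q0 hq0
            rw [if_pos (hfull 0 (by omega))] at hMq
            rw [fire_apply, if_neg h1, if_pos h2, hMq] at hsafe
            omega
        · -- old transition w
          have hwK : ¬ (∃ i < n, w = t i) := by
            rcases (hR.mem_trans' w).1 hen.1 with ⟨-, hKw⟩ | hc
            · exact hKw
            · exact absurd hc hw
          have hwtr : w ∈ N.trans := by
            rcases (hR.mem_trans' w).1 hen.1 with ⟨hw', -⟩ | hc
            · exact hw'
            · exact absurd hc hw
          by_cases hex : ∃ q0, (∃ i, i < n ∧ q0 ∈ postT N (t i)) ∧ q0 ∈ preT N w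
          · obtain ⟨q0, ⟨i0, hi0, hq0i⟩, hq0w⟩ := hex
            have hsub : ∀ j, j < n → ∀ q ∈ postT N (t j), q ∈ preT N w :=
              fun j hj q hq => gJoin w q0 hq0w i0 hi0 hq0i j hj q hq
            rcases hrel with rfl | ⟨hfull, hXM⟩
            · exfalso
              have h1 := hen.2 q0 (by rw [hR.preT_old hwK hw]; exact hq0w)
              rw [parBk_apply, pBmem S hS i0 hi0 q0 hq0i,
                parA_zero N t (fun j hjS hc =>
                  gPrePost j (hS j hjS) q0 hc i0 hi0 hq0i),
                hval i0 hi0 q0 hq0i] at h1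
              by_cases hiS : i0 ∈ S <;>
                simp only [hiS, if_true, if_false] at h1 <;> omega
            · rw [hXM] at hen hs hXr'
              have henN : Enabled N M w :=
                ⟨hwtr, fun p hp => hen.2 p (by rw [hR.preT_old hwK hw]; exact hp)⟩
              refine reach_head henN
                (ih _ _ hs (fire N w M) ∅ (by simp) hXr' ?_ (Or.inl ?_) hfin)
              · intro i hi q hq
                have h2 : q ∈ preT N w := hsub i hi q hq
                have h3 : q ∉ postT N w := fun hc => gOldPost w hwK q hc i hi hq
                have hMq := hval i hi q hq
                rw [if_pos (hfull i hi)] at hMq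
                rw [fire_apply, if_pos h2, if_neg h3, hMq,
                  if_neg (Finset.notMem_empty i)]
              · rw [parBk_empty]
                exact hR.fire_old hwK hw M
          · push_neg at hex
            have htype1 : ∀ p ∈ preT N w, ∀ i, i < n → p ∉ postT N (t i) :=
              fun p hp i hi hc => hex p ⟨i, hi, hc⟩ hp
            rcases hrel with rfl | ⟨hfull, hXM⟩
            · have henN : Enabled N M w := by
                refine ⟨hwtr, ?_⟩
                intro p hp
                have h1 := hen.2 p (by rw [hR.preT_old hwK hw]; exact hp)
                rw [parBk_apply,
                  parA_zero N t (fun j hjS hc =>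
                    gOldPre w hwK p hp j (hS j hjS) hc),
                  parB_zero N t (fun j hjS hc =>
                    htype1 p hp j (hS j hjS) hc)] at h1
                omega
              refine reach_head henN
                (ih _ _ hs (fire N w M) S hS hXr' ?_ (Or.inl ?_) hfin)
              · intro i hi q hq
                have h2 : q ∉ preT N w := fun hc => htype1 q hc i hi hq
                have h3 : q ∉ postT N w := fun hc => gOldPost w hwK q hc i hi hq
                rw [fire_apply, if_neg h2, if_neg h3, hval i hi q hq]
                omega
              · funext p
                rw [fire_apply, hR.preT_old hwK hw, hR.postT_old hwK hw,
                  parBk_apply, parBk_apply, fire_apply]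
                by_cases h1 : p ∈ preT N w
                · have hA := parA_zero N t (fun j hjS hc =>
                    gOldPre w hwK p h1 j (hS j hjS) hc)
                  have hB := parB_zero N t (fun j hjS hc =>
                    htype1 p h1 j (hS j hjS) hc)
                  have hMp : 0 < M p := by
                    have h2 := hen.2 p (by rw [hR.preT_old hwK hw]; exact h1)
                    rw [parBk_apply, hA, hB] at h2
                    omega
                  rw [hA, hB]
                  by_cases h2 : p ∈ postT N w <;>
                    simp only [h1, h2, if_true, if_false] <;> omega
                · by_cases h2 : p ∈ postT N w
                  · have hB := parB_zero N t (fun j hjS hc =>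
                      gOldPost w hwK p h2 j (hS j hjS) hc)
                    rw [hB]
                    simp only [h1, h2, if_true, if_false]
                    omega
                  · simp only [h1, h2, if_true, if_false]
                    omega
            · rw [hXM] at hen hs hXr'
              have henN : Enabled N M w :=
                ⟨hwtr, fun p hp => hen.2 p (by rw [hR.preT_old hwK hw]; exact hp)⟩
              refine reach_head henN
                (ih _ _ hs (fire N w M) S hS hXr' ?_ (Or.inr ⟨hfull, ?_⟩) hfin)
              · intro i hi q hq
                have h2 : q ∉ preT N w := fun hc => htype1 q hc i hi hq
                have h3 : q ∉ postT N w := fun hc => gOldPost w hwK q hc i hi hq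
                rw [fire_apply, if_neg h2, if_neg h3, hval i hi q hq]
                omega
              · exact hR.fire_old hwK hw M
  refine ⟨⟨hsafeN, ?_, ?_⟩, hSSN, hUFN⟩
  · intro M hM
    obtain ⟨S, hS, hWr, hval⟩ := hRSall M hM
    obtain ⟨σ, hσ⟩ := hS'.2.1 _ hWr
    exact hOTC σ _ _ hσ M S hS hWr hval (Or.inl rfl) rfl
  · intro u hu
    by_cases hKu : ∃ i < n, u = t i
    · obtain ⟨i, hi, rfl⟩ := hKu
      obtain ⟨X, hXr, henX⟩ := hS'.2.2 t' hR.t'_mem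
      refine ⟨X, hbs hXr, htr i hi, ?_⟩
      intro p hp
      exact henX.2 p (by rw [f_pre']; exact ⟨i, hi, hp⟩)
    · obtain ⟨X, hXr, henX⟩ := hS'.2.2 u (hR.old_mem hu hKu)
      exact ⟨X, hbs hXr, hu, fun p hp =>
        henX.2 p (by rw [hR.preT_old hKu (hR.old_ne_t' hu)]; exact hp)⟩

end CasePar2
/-- Corollary of Theorem 1 (soundness of the original net): if the WF-net `N`
with labelling `ℓ : T → Σ ∪ {τ}` (regarded as a PTree-WF-net via leaf process
trees) reduces, by a finite sequence of pattern reductions, to a PTree-WF-net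
`N'` with a single transition `t` and arc set `{(p_i, t), (t, p_o)}`, then `N`
is sound. -/
theorem wfnet_to_process_tree_sound (P T A : Type)
    (N : LPNet P T A) (pi po : P) (ℓ : T → Option A)
    (hWF : IsWFNet N pi po)
    (hlab : N.label = fun u => match ℓ u with
      | none => PTree.tau
      | some a => PTree.act a)
    (N' : LPNet P T A)
    (hred : Relation.ReflTransGen Reduces N N')
    (t : T)
    (htrans : N'.trans = {t})
    (hpt : N'.pt = {(pi, t)})
    (htp : N'.tp = {(t, po)}) :
    Sound N pi po := by
  have hI : NInv N pi po := NInv_of_WF hWF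
  have hne : pi ≠ po := hWF.2.2.1
  have key : ∀ N₀ : LPNet P T A, Relation.ReflTransGen Reduces N₀ N' →
      NInv N₀ pi po → Good N₀ pi po := by
    intro N₀ h
    induction h using Relation.ReflTransGen.head_induction_on with
    | refl => exact fun _ => trivial_good hne htrans hpt htp
    | head hstep htail ih =>
      intro hI₀
      have hG := ih (reduces_inv hstep hI₀)
      rcases hstep with ⟨n, tt, tt', hP, hRd⟩ | ⟨n, tt, tt', hP, hRd⟩ |
        ⟨n, tt, tt', hP, hRd⟩ | ⟨t₁, t₂, tt', hP, hRd⟩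
      · exact seq_good hP hRd hI₀ hG
      · exact choice_good hP hRd hI₀ hG
      · exact par_good hP hRd hI₀ hG
      · exact loop_good hP hRd hI₀ hG
  exact (key N hred hI).1
end

section
/- Pattern reduction preserves the WF-net property: if W̃ is a PTree-WF-net and t₁,...,tₙ form a →-pattern in W̃, then the →-reduced net W̃' (with the same designated places p_i and p_o) is again a PTree-WF-net; that is, in W̃', p_i is the only place with empty pre-set, p_o is the only place with empty post-set, and every place and transition of W̃' lies on a directed path from p_i to p_o. -/
variable {P T A : Type}

open Classical

/-- Lifting of reflexive-transitive closure along a map. -/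
lemma rtg_lift' {α : Type*} {r r' : α → α → Prop} {f : α → α}
    (h : ∀ x y, r x y → Relation.ReflTransGen r' (f x) (f y)) :
    ∀ {a b : α}, Relation.ReflTransGen r a b →
      Relation.ReflTransGen r' (f a) (f b) := by
  intro a b hab
  induction hab with
  | refl => exact Relation.ReflTransGen.refl
  | tail _ h2 ih => exact ih.trans (h _ _ h2)

/-- Collapsing map sending removed places and removed transitions to `t'`. -/
noncomputable def collapse {P T : Type} (S : Set P) (ts : Set T) (t' : T) :
    P ⊕ T → P ⊕ T
  | .inl p => if p ∈ S then .inr t' else .inl p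
  | .inr u => if u ∈ ts then .inr t' else .inr u

/-- Pattern reduction preserves the WF-net property: if `N` is a PTree-WF-net
and `t₁,...,tₙ` form a `→`-pattern in `N`, then the `→`-reduced net `N'`
(with the same designated places `p_i` and `p_o`) is again a PTree-WF-net:
`p_i` is the only place with empty pre-set, `p_o` is the only place with
empty post-set, and every place and transition of `N'` lies on a directed
path from `p_i` to `p_o`. -/
theorem seq_reduction_isWFNet (P T A : Type)
    (N N' : LPNet P T A) (pi po : P)
    (hWF : IsWFNet N pi po)
    (n : ℕ) (t : ℕ → T) (t' : T)
    (hpat : SeqPattern N n t)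
    (hred : SeqReduced N N' n t t') :
    IsWFNet N' pi po := by
  obtain ⟨hpiN, hpoN, hne, hPfin, hTfin, hptw, htpw, hpre, hpost, hplace, htrans⟩ := hWF
  obtain ⟨hn2, htmem, htinj, hpp, huniq, -⟩ := hpat
  obtain ⟨ht'new, hP', hT', hpt', htp', -⟩ := hred
  set S : Set P := ⋃ i ∈ Finset.range (n - 1), postT N (t i) with hSdef
  set ts : Set T := {u | ∃ i < n, u = t i} with htsdef
  have hSmem : ∀ p : P, p ∈ S ↔ ∃ i, i < n - 1 ∧ p ∈ postT N (t i) := by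
    intro p
    simp [hSdef, Set.mem_iUnion, Finset.mem_range]
  have hSpre : ∀ i, i < n - 1 → ∀ p ∈ postT N (t i),
      preP N p = {t i} ∧ postP N p = {t (i + 1)} := fun i hi p hp =>
    huniq i (by omega) p hp
  -- pi and po are not among the removed places
  have hpiS : pi ∉ S := by
    intro h
    obtain ⟨i, hi, hp⟩ := (hSmem pi).mp h
    have h1 := (hSpre i hi pi hp).1
    have h0 : preP N pi = ∅ := (hpre pi hpiN).mpr rfl
    rw [h0] at h1
    exact (Set.singleton_ne_empty (t i)) h1.symm
  have hpoS : po ∉ S := by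
    intro h
    obtain ⟨i, hi, hp⟩ := (hSmem po).mp h
    have h1 := (hSpre i hi po hp).2
    have h0 : postP N po = ∅ := (hpost po hpoN).mpr rfl
    rw [h0] at h1
    exact (Set.singleton_ne_empty (t (i + 1))) h1.symm
  -- places adjacent to surviving transitions are not removed
  have hAsrc : ∀ p u, (p, u) ∈ N.pt → u ∉ ts → p ∉ S := by
    intro p u hpu hu hpS
    obtain ⟨i, hi, hp⟩ := (hSmem p).mp hpS
    have h2 := (hSpre i hi p hp).2
    have : u ∈ postP N p := hpu
    rw [h2] at this
    exact hu ⟨i + 1, by omega, this⟩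
  have hBsrc : ∀ p, p ∈ preT N (t 0) → p ∉ S := by
    intro p hp hpS
    obtain ⟨i, hi, hpi⟩ := (hSmem p).mp hpS
    have h2 := (hSpre i hi p hpi).2
    have : t 0 ∈ postP N p := hp
    rw [h2] at this
    have := htinj 0 (by omega) (i + 1) (by omega) this.symm.symm
    · omega
  have hCdst : ∀ u p, (u, p) ∈ N.tp → u ∉ ts → p ∉ S := by
    intro u p hup hu hpS
    obtain ⟨i, hi, hp⟩ := (hSmem p).mp hpS
    have h1 := (hSpre i hi p hp).1
    have : u ∈ preP N p := hup
    rw [h1] at this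
    exact hu ⟨i, by omega, this⟩
  have hDdst : ∀ p, p ∈ postT N (t (n - 1)) → p ∉ S := by
    intro p hp hpS
    obtain ⟨i, hi, hpi⟩ := (hSmem p).mp hpS
    have h1 := (hSpre i hi p hpi).1
    have : t (n - 1) ∈ preP N p := hp
    rw [h1] at this
    have := htinj (n - 1) (by omega) i (by omega) this
    omega
  have ht0ts : t 0 ∈ ts := ⟨0, by omega, rfl⟩
  have htn1ts : t (n - 1) ∈ ts := ⟨n - 1, by omega, rfl⟩
  -- the collapsing map
  set f : P ⊕ T → P ⊕ T := collapse S ts t' with hfdef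
  have hfP : ∀ p : P, p ∉ S → f (Sum.inl p) = Sum.inl p := by
    intro p hp; simp [hfdef, collapse, hp]
  have hfPS : ∀ p : P, p ∈ S → f (Sum.inl p) = Sum.inr t' := by
    intro p hp; simp [hfdef, collapse, hp]
  have hfT : ∀ u : T, u ∉ ts → f (Sum.inr u) = Sum.inr u := by
    intro u hu; simp [hfdef, collapse, hu]
  have hfTS : ∀ u : T, u ∈ ts → f (Sum.inr u) = Sum.inr t' := by
    intro u hu; simp [hfdef, collapse, hu]
  -- single edge lifting
  have hstep : ∀ x y, netEdge N x y →
      Relation.ReflTransGen (netEdge N') (f x) (f y) := by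
    rintro x y (⟨p, u, rfl, rfl, hpu⟩ | ⟨u, p, rfl, rfl, hup⟩)
    · by_cases hu : u ∈ ts
      · obtain ⟨i, hi, rfl⟩ := hu
        rcases Nat.eq_zero_or_pos i with rfl | hipos
        · -- p ∈ •t₀ : edge p → t'
          have hp0 : p ∈ preT N (t 0) := hpu
          rw [hfP p (hBsrc p hp0), hfTS (t 0) ht0ts]
          refine Relation.ReflTransGen.single (Or.inl ⟨p, t', rfl, rfl, ?_⟩)
          rw [hpt']
          exact Or.inr ⟨hp0, rfl⟩
        · -- p is a removed place, both collapse to t'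
          have hp : p ∈ postT N (t (i - 1)) := by
            have h2 := (hpp (i - 1) (by omega)).2
            have : (i - 1) + 1 = i := by omega
            rw [this] at h2
            rw [h2]
            exact hpu
          have hpS : p ∈ S := (hSmem p).mpr ⟨i - 1, by omega, hp⟩
          rw [hfPS p hpS, hfTS (t i) ⟨i, hi, rfl⟩]
      · -- surviving edge
        rw [hfP p (hAsrc p u hpu hu), hfT u hu]
        refine Relation.ReflTransGen.single (Or.inl ⟨p, u, rfl, rfl, ?_⟩)
        rw [hpt']
        exact Or.inl ⟨hpu, fun h => hu h⟩
    · by_cases hu : u ∈ ts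
      · obtain ⟨i, hi, rfl⟩ := hu
        by_cases hin : i = n - 1
        · subst hin
          have hp : p ∈ postT N (t (n - 1)) := hup
          rw [hfTS (t (n - 1)) htn1ts, hfP p (hDdst p hp)]
          refine Relation.ReflTransGen.single (Or.inr ⟨t', p, rfl, rfl, ?_⟩)
          rw [htp']
          exact Or.inr ⟨rfl, hp⟩
        · have hpS : p ∈ S := (hSmem p).mpr ⟨i, by omega, hup⟩
          rw [hfTS (t i) ⟨i, hi, rfl⟩, hfPS p hpS]
      · rw [hfT u hu, hfP p (hCdst u p hup hu)]
        refine Relation.ReflTransGen.single (Or.inr ⟨u, p, rfl, rfl, ?_⟩)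
        rw [htp']
        exact Or.inl ⟨hup, fun h => hu h⟩
  refine ⟨?_, ?_, hne, ?_, ?_, ?_, ?_, ?_, ?_, ?_, ?_⟩
  · rw [hP']; exact ⟨hpiN, hpiS⟩
  · rw [hP']; exact ⟨hpoN, hpoS⟩
  · rw [hP']; exact hPfin.subset Set.diff_subset
  · rw [hT']; exact (hTfin.diff).union (Set.finite_singleton _)
  · -- pt arcs
    intro a ha
    rw [hpt'] at ha
    rcases ha with ⟨ha, hna⟩ | ⟨h1, h2⟩
    · refine ⟨?_, ?_⟩
      · rw [hP']
        exact ⟨(hptw a ha).1, hAsrc a.1 a.2 ha hna⟩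
      · rw [hT']
        exact Or.inl ⟨(hptw a ha).2, hna⟩
    · refine ⟨?_, ?_⟩
      · rw [hP']
        exact ⟨(hptw (a.1, t 0) h1).1, hBsrc a.1 h1⟩
      · rw [hT', h2]; exact Or.inr rfl
  · -- tp arcs
    intro a ha
    rw [htp'] at ha
    rcases ha with ⟨ha, hna⟩ | ⟨h1, h2⟩
    · refine ⟨?_, ?_⟩
      · rw [hT']
        exact Or.inl ⟨(htpw a ha).1, hna⟩
      · rw [hP']
        exact ⟨(htpw a ha).2, hCdst a.1 a.2 ha hna⟩
    · refine ⟨?_, ?_⟩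
      · rw [hT', h1]; exact Or.inr rfl
      · rw [hP']
        exact ⟨(htpw (t (n - 1), a.2) h2).2, hDdst a.2 h2⟩
  · -- source place characterization
    intro p hp
    rw [hP'] at hp
    constructor
    · intro h
      apply (hpre p hp.1).mp
      ext u
      simp only [Set.mem_empty_iff_false, iff_false]
      intro hu
      by_cases hut : u ∈ ts
      · obtain ⟨i, hi, rfl⟩ := hut
        by_cases hin : i = n - 1
        · subst hin
          have : t' ∈ preP N' p := by
            show (t', p) ∈ N'.tp
            rw [htp']
            exact Or.inr ⟨rfl, hu⟩
          rw [h] at this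
          exact this
        · exact hp.2 ((hSmem p).mpr ⟨i, by omega, hu⟩)
      · have : u ∈ preP N' p := by
          show (u, p) ∈ N'.tp
          rw [htp']
          exact Or.inl ⟨hu, fun hh => hut hh⟩
        rw [h] at this
        exact this
    · intro hppi
      subst p
      ext u
      simp only [Set.mem_empty_iff_false, iff_false]
      intro hu
      have hu' : (u, pi) ∈ N'.tp := hu
      rw [htp'] at hu'
      have h0 : preP N pi = ∅ := (hpre pi hpiN).mpr rfl
      rcases hu' with ⟨hu', -⟩ | ⟨-, hu'⟩
      · have : u ∈ preP N pi := hu'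
        rw [h0] at this
        exact this
      · have : t (n - 1) ∈ preP N pi := hu'
        rw [h0] at this
        exact this
  · -- sink place characterization
    intro p hp
    rw [hP'] at hp
    constructor
    · intro h
      apply (hpost p hp.1).mp
      ext u
      simp only [Set.mem_empty_iff_false, iff_false]
      intro hu
      by_cases hut : u ∈ ts
      · obtain ⟨i, hi, rfl⟩ := hut
        rcases Nat.eq_zero_or_pos i with rfl | hipos
        · have : t' ∈ postP N' p := by
            show (p, t') ∈ N'.pt
            rw [hpt']
            exact Or.inr ⟨hu, rfl⟩
          rw [h] at this
          exact this
        · have hpS : p ∈ postT N (t (i - 1)) := by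
            have h2 := (hpp (i - 1) (by omega)).2
            have heq : (i - 1) + 1 = i := by omega
            rw [heq] at h2
            rw [h2]
            exact hu
          exact hp.2 ((hSmem p).mpr ⟨i - 1, by omega, hpS⟩)
      · have : u ∈ postP N' p := by
          show (p, u) ∈ N'.pt
          rw [hpt']
          exact Or.inl ⟨hu, fun hh => hut hh⟩
        rw [h] at this
        exact this
    · intro hppo
      subst p
      ext u
      simp only [Set.mem_empty_iff_false, iff_false]
      intro hu
      have hu' : (po, u) ∈ N'.pt := hu
      rw [hpt'] at hu'
      have h0 : postP N po = ∅ := (hpost po hpoN).mpr rfl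
      rcases hu' with ⟨hu', -⟩ | ⟨hu', -⟩
      · have : u ∈ postP N po := hu'
        rw [h0] at this
        exact this
      · have : t 0 ∈ postP N po := hu'
        rw [h0] at this
        exact this
  · -- connectivity of places
    intro p hp
    rw [hP'] at hp
    obtain ⟨h1, h2⟩ := hplace p hp.1
    have l1 := rtg_lift' hstep h1
    have l2 := rtg_lift' hstep h2
    rw [hfP pi hpiS, hfP p hp.2] at l1
    rw [hfP p hp.2, hfP po hpoS] at l2
    exact ⟨l1, l2⟩
  · -- connectivity of transitions
    intro u hu
    rw [hT'] at hu
    rcases hu with ⟨huN, huts⟩ | hu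
    · obtain ⟨h1, h2⟩ := htrans u huN
      have l1 := rtg_lift' hstep h1
      have l2 := rtg_lift' hstep h2
      rw [hfP pi hpiS, hfT u huts] at l1
      rw [hfT u huts, hfP po hpoS] at l2
      exact ⟨l1, l2⟩
    · have hu' : u = t' := hu
      subst hu'
      obtain ⟨h1, -⟩ := htrans (t 0) (htmem 0 (by omega))
      obtain ⟨-, h2⟩ := htrans (t (n - 1)) (htmem (n - 1) (by omega))
      have l1 := rtg_lift' hstep h1
      have l2 := rtg_lift' hstep h2
      rw [hfP pi hpiS, hfTS (t 0) ht0ts] at l1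
      rw [hfTS (t (n - 1)) htn1ts, hfP po hpoS] at l2
      exact ⟨l1, l2⟩
end
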